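/- arXiv:2403.12158 — 5 statements merged into one kernel-verified Lean document; each statement's English description precedes it below -/
import Mathlib

section
/- (Theorem 1.) Let n ≥ 1 be an integer and let α, β : Fin (n+1) → ℝ satisfy α i > 0 and β i > 0 for all i. Let d_α and d_β be the Dirichlet densities with parameters α and β in the n-dimensional parametrization. Then the Kullback–Leibler divergence of d_α from d_β, namely ∫ d_α(y) · log (d_α(y) / d_β(y)) dy over T with respect to Lebesgue measure on Fin n → ℝ, equals log (Γ(∑ i, α i) / Γ(∑ i, β i)) + ∑ i, log (Γ(β i) / Γ(α i)) + ∑ i, (α i − β i) · (ψ(α i) − ψ(∑ i, α i)). -/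
open MeasureTheory

/-- The Dirichlet density with parameter `α` in the `n`-dimensional parametrization:
nonzero exactly on `T = {y | (∀ i, 0 < y i) ∧ ∑ i, y i < 1}`. -/
noncomputable def dirichletDensity (n : ℕ) (α : Fin (n + 1) → ℝ) (y : Fin n → ℝ) : ℝ :=
  open Classical in
  if (∀ i, 0 < y i) ∧ ∑ i, y i < 1 then
    (Real.Gamma (∑ i, α i) / ∏ i, Real.Gamma (α i)) *
      (∏ i : Fin n, (y i) ^ (α i.castSucc - 1)) * (1 - ∑ i, y i) ^ (α (Fin.last n) - 1)
  else 0

/-- The digamma function. -/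
noncomputable def digamma (x : ℝ) : ℝ :=
  deriv (fun t => Real.log (Real.Gamma t)) x

/-!
Write `w = (y, 1 - ∑ y)` for the `n + 1` coordinates of a point of the simplex and
`B(α) = ∏ Γ(αᵢ) / Γ(∑ α)`. On the simplex `d_α = ∏ w_j ^ (α_j - 1) / B(α)`, so
`log (d_α / d_β) = log (B(β) / B(α)) + ∑ (α_j - β_j) log w_j`, and the divergence reduces to
`∫ d_α = 1` and to the expectations `E_α[log w_j]`.

Both come from the Dirichlet integral `∫ ∏ w_j ^ (α_j - 1) = B(α)`, proved for a simplex
`{y > 0, ∑ y < c}` of arbitrary size `c` by induction on `n`: the slice `y₀ = t` is the simplex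
of size `c - t`, and integrating out `t` leaves a Beta integral. Hence
`E_α[w_j ^ t] = Γ(∑ α) Γ(α_j + t) / (Γ(α_j) Γ(∑ α + t))`, and differentiating at `t = 0` under
the integral sign (dominated by `|log w| w ^ t ≤ (2/δ) w ^ (-δ)` for `|t| < δ/2`) gives
`E_α[log w_j] = ψ(α_j) - ψ(∑ α)`.
-/

open Set Real
open scoped ENNReal

theorem Complex.betaIntegral_ofReal {a b : ℝ} (ha : 0 < a) (hb : 0 < b) :
    Complex.betaIntegral a b = ↑(Real.Gamma a * Real.Gamma b / Real.Gamma (a + b)) := by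
  have h := Complex.Gamma_mul_Gamma_eq_betaIntegral (s := a) (t := b) (by simpa) (by simpa)
  rw [← Complex.ofReal_add] at h
  simp only [Complex.Gamma_ofReal] at h
  have hab : (Real.Gamma (a + b) : ℂ) ≠ 0 := by
    exact_mod_cast (Gamma_pos_of_pos (add_pos ha hb)).ne'
  rw [Complex.ofReal_div, Complex.ofReal_mul, h, mul_div_cancel_left₀ _ hab]

theorem integral_rpow_mul_sub_rpow {a b c : ℝ} (ha : 0 < a) (hb : 0 < b) (hc : 0 < c) :
    ∫ x in Ioo 0 c, x ^ (a - 1) * (c - x) ^ (b - 1)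
      = c ^ (a + b - 1) * (Gamma a * Gamma b / Gamma (a + b)) := by
  apply Complex.ofReal_injective
  rw [← integral_complex_ofReal, Complex.ofReal_mul, ← Complex.betaIntegral_ofReal ha hb,
    Complex.ofReal_cpow hc.le, (by push_cast; ring : ((a + b - 1 : ℝ) : ℂ) = a + b - 1),
    ← Complex.betaIntegral_scaled _ _ hc, intervalIntegral.integral_of_le hc.le,
    integral_Ioc_eq_integral_Ioo]
  refine setIntegral_congr_fun measurableSet_Ioo fun x hx => ?_
  rw [Complex.ofReal_mul, Complex.ofReal_cpow hx.1.le, Complex.ofReal_cpow (sub_pos.2 hx.2).le]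
  push_cast
  rfl

theorem lintegral_rpow_mul_sub_rpow {a b c : ℝ} (ha : 0 < a) (hb : 0 < b) (hc : 0 < c) :
    ∫⁻ x in Ioo 0 c, ENNReal.ofReal (x ^ (a - 1) * (c - x) ^ (b - 1))
      = ENNReal.ofReal (c ^ (a + b - 1) * (Gamma a * Gamma b / Gamma (a + b))) := by
  have hpos : 0 < c ^ (a + b - 1) * (Gamma a * Gamma b / Gamma (a + b)) := by positivity
  rw [← integral_rpow_mul_sub_rpow ha hb hc] at hpos ⊢
  refine (ofReal_integral_eq_lintegral_ofReal (.of_integral_ne_zero hpos.ne') ?_).symm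
  filter_upwards [ae_restrict_mem measurableSet_Ioo] with x hx
  have := sub_pos.2 hx.2
  have := hx.1
  positivity

theorem lintegral_fin_cons {E : Type*} [MeasureSpace E] [SigmaFinite (volume : Measure E)]
    {n : ℕ} {f : (Fin (n + 1) → E) → ℝ≥0∞} (hf : Measurable f) :
    ∫⁻ y, f y = ∫⁻ t, ∫⁻ z, f (Fin.cons t z) := by
  rw [← (volume_preserving_piFinSuccAbove (fun _ => E) 0).symm.lintegral_comp hf,
    Measure.volume_eq_prod, lintegral_prod]
  · simp [MeasurableEquiv.piFinSuccAbove_symm_apply, Fin.insertNthEquiv, Fin.insertNth_zero']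
  · exact (hf.comp (MeasurableEquiv.measurable _)).aemeasurable

theorem abs_log_le_rpow_neg_div {w ε : ℝ} (hw₀ : 0 < w) (hw₁ : w ≤ 1) (hε : 0 < ε) :
    |log w| ≤ w ^ (-ε) / ε := by
  rw [abs_of_nonpos (log_nonpos hw₀.le hw₁), ← log_inv, rpow_neg hw₀.le, ← inv_rpow hw₀.le]
  exact log_le_rpow_div (inv_nonneg.2 hw₀.le) hε

theorem hasDerivAt_integral_mul_rpow {X : Type*} [MeasurableSpace X] {μ : Measure X}
    {K w : X → ℝ} (hK : AEStronglyMeasurable K μ) (hw : AEMeasurable w μ)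
    (hw₀ : ∀ᵐ x ∂μ, 0 < w x) (hw₁ : ∀ᵐ x ∂μ, w x ≤ 1) {δ : ℝ} (hδ : 0 < δ)
    (hint : Integrable (fun x => K x * w x ^ (-δ)) μ) :
    Integrable (fun x => K x * log (w x)) μ ∧
      HasDerivAt (fun t : ℝ => ∫ x, K x * w x ^ t ∂μ) (∫ x, K x * log (w x) ∂μ) 0 := by
  have hmeas : ∀ t : ℝ, AEStronglyMeasurable (fun x => K x * w x ^ t) μ := fun t =>
    hK.mul (hw.pow_const t).aestronglyMeasurable
  have hK_int : Integrable K μ := by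
    refine hint.mono hK ?_
    filter_upwards [hw₀, hw₁] with x h₀ h₁
    rw [norm_mul]
    exact le_mul_of_one_le_right (norm_nonneg _) <| by
      rw [norm_of_nonneg (rpow_nonneg h₀.le _)]
      exact one_le_rpow_of_pos_of_le_one_of_nonpos h₀ h₁ (by linarith)
  have key := hasDerivAt_integral_of_dominated_loc_of_deriv_le
    (F := fun (t : ℝ) x => K x * w x ^ t) (F' := fun t x => K x * (w x ^ t * log (w x)))
    (bound := fun x => 2 / δ * ‖K x * w x ^ (-δ)‖)
    (Metric.ball_mem_nhds 0 (half_pos hδ)) (.of_forall hmeas) (by simpa using hK_int)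
    (by simp only [rpow_zero, one_mul]; exact hK.mul hw.log.aestronglyMeasurable) ?_
    (hint.norm.const_mul _) ?_
  · simpa using key
  · filter_upwards [hw₀, hw₁] with x h₀ h₁ t ht
    rw [Metric.mem_ball, dist_zero_right, norm_eq_abs, abs_lt] at ht
    have hpow : w x ^ t ≤ w x ^ (-(δ / 2)) := rpow_le_rpow_of_exponent_ge h₀ h₁ ht.1.le
    have hlog := abs_log_le_rpow_neg_div h₀ h₁ (half_pos hδ)
    calc ‖K x * (w x ^ t * log (w x))‖ = |K x| * (w x ^ t * |log (w x)|) := by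
          rw [norm_mul, norm_mul, norm_of_nonneg (rpow_nonneg h₀.le _), norm_eq_abs, norm_eq_abs]
      _ ≤ |K x| * (w x ^ (-(δ / 2)) * (w x ^ (-(δ / 2)) / (δ / 2))) := by gcongr
      _ = 2 / δ * ‖K x * w x ^ (-δ)‖ := by
          rw [norm_mul, norm_of_nonneg (rpow_nonneg h₀.le _), norm_eq_abs, mul_div_assoc',
            ← rpow_add h₀]
          ring_nf
  · filter_upwards [hw₀] with x h₀ t _
    exact ((hasStrictDerivAt_const_rpow h₀ t).hasDerivAt).const_mul (K x)

theorem hasDerivAt_Gamma_of_pos {x : ℝ} (hx : 0 < x) :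
    HasDerivAt Gamma (Gamma x * digamma x) x := by
  have hΓ := Gamma_pos_of_pos hx
  have hd : DifferentiableAt ℝ Gamma x := differentiableAt_Gamma fun m h => by
    have : (0 : ℝ) ≤ m := m.cast_nonneg
    linarith
  rw [digamma, (hd.hasDerivAt.log hΓ.ne').deriv, mul_div_cancel₀ _ hΓ.ne']
  exact hd.hasDerivAt

theorem hasDerivAt_Gamma_add_div_Gamma_add {a b : ℝ} (ha : 0 < a) (hb : 0 < b) :
    HasDerivAt (fun t => Gamma (a + t) / Gamma (b + t))
      (Gamma a / Gamma b * (digamma a - digamma b)) 0 := by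
  have hA := HasDerivAt.comp_const_add a 0 (by rw [add_zero]; exact hasDerivAt_Gamma_of_pos ha)
  have hB := HasDerivAt.comp_const_add b 0 (by rw [add_zero]; exact hasDerivAt_Gamma_of_pos hb)
  have hΓb := Gamma_pos_of_pos hb
  refine (hA.fun_div hB (by rw [add_zero]; exact hΓb.ne')).congr_deriv ?_
  rw [add_zero, add_zero]
  field_simp

section multiBeta

variable {ι : Type*} [Fintype ι]

noncomputable def multiBeta (α : ι → ℝ) : ℝ :=
  (∏ i, Gamma (α i)) / Gamma (∑ i, α i)

theorem multiBeta_pos [Nonempty ι] {α : ι → ℝ} (hα : ∀ i, 0 < α i) :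
    0 < multiBeta α :=
  div_pos (Finset.prod_pos fun i _ => Gamma_pos_of_pos (hα i))
    (Gamma_pos_of_pos (Finset.sum_pos (fun i _ => hα i) Finset.univ_nonempty))

theorem multiBeta_eq_mul_multiBeta_tail {n : ℕ} (α : Fin (n + 1) → ℝ)
    (h : Gamma (∑ i, Fin.tail α i) ≠ 0) :
    multiBeta α = Gamma (α 0) * Gamma (∑ i, Fin.tail α i) / Gamma (∑ i, α i)
      * multiBeta (Fin.tail α) := by
  rw [multiBeta, multiBeta, Fin.prod_univ_succ]
  field_simp
  rfl

theorem multiBeta_add_single [DecidableEq ι] (α : ι → ℝ) (j : ι) (t : ℝ)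
    (hα : ∀ i, 0 < α i) (ht : 0 < α j + t) :
    multiBeta (α + Pi.single j t)
      = multiBeta α *
          (Gamma (α j + t) / Gamma (α j) * (Gamma (∑ i, α i) / Gamma (∑ i, α i + t))) := by
  have hsum : ∑ i, (α + Pi.single j t : ι → ℝ) i = ∑ i, α i + t := by
    simp [Finset.sum_add_distrib]
  have hprod : ∏ i, Gamma ((α + Pi.single j t : ι → ℝ) i)
      = Gamma (α j + t) / Gamma (α j) * ∏ i, Gamma (α i) := by
    rw [← Finset.mul_prod_erase _ _ (Finset.mem_univ j),
      ← Finset.mul_prod_erase _ (fun i => Gamma (α i)) (Finset.mem_univ j),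
      Finset.prod_congr rfl fun i hi => by
        rw [Pi.add_apply, Pi.single_eq_of_ne (Finset.ne_of_mem_erase hi), add_zero]]
    field_simp [(Gamma_pos_of_pos (hα j)).ne']
    simp [mul_comm]
  have hαj : α j ≤ ∑ i, α i := Finset.single_le_sum (fun i _ => (hα i).le) (Finset.mem_univ j)
  have := Gamma_pos_of_pos (hα j)
  have := Gamma_pos_of_pos (show 0 < ∑ i, α i by linarith [hα j])
  have := Gamma_pos_of_pos (show 0 < ∑ i, α i + t by linarith)
  rw [multiBeta, multiBeta, hsum, hprod]
  field_simp

theorem log_multiBeta_div [Nonempty ι] {α β : ι → ℝ}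
    (hα : ∀ i, 0 < α i) (hβ : ∀ i, 0 < β i) :
    log (multiBeta β / multiBeta α)
      = log (Gamma (∑ i, α i) / Gamma (∑ i, β i)) + ∑ i, log (Gamma (β i) / Gamma (α i)) := by
  have hΓα := fun i => (Gamma_pos_of_pos (hα i)).ne'
  have hΓβ := fun i => (Gamma_pos_of_pos (hβ i)).ne'
  have hSα := (Gamma_pos_of_pos (Finset.sum_pos (fun i _ => hα i) Finset.univ_nonempty)).ne'
  have hSβ := (Gamma_pos_of_pos (Finset.sum_pos (fun i _ => hβ i) Finset.univ_nonempty)).ne'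
  have : multiBeta β / multiBeta α
      = Gamma (∑ i, α i) / Gamma (∑ i, β i) * ∏ i, (Gamma (β i) / Gamma (α i)) := by
    rw [multiBeta, multiBeta, Finset.prod_div_distrib]
    field_simp [Finset.prod_ne_zero_iff.2 fun i _ => hΓα i]
  have hratio := fun i => div_ne_zero (hΓβ i) (hΓα i)
  rw [this, log_mul (div_ne_zero hSα hSβ) (Finset.prod_ne_zero_iff.2 fun i _ => hratio i),
    log_prod fun i _ => hratio i]

end multiBeta

def openSimplex (n : ℕ) (c : ℝ) : Set (Fin n → ℝ) :=
  {y | (∀ i, 0 < y i) ∧ ∑ i, y i < c}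

def simplexCoords {n : ℕ} (c : ℝ) (y : Fin n → ℝ) : Fin (n + 1) → ℝ :=
  Fin.snoc y (c - ∑ i, y i)

noncomputable def dirichletKernel {n : ℕ} (c : ℝ) (α : Fin (n + 1) → ℝ) (y : Fin n → ℝ) :
    ℝ :=
  ∏ j, simplexCoords c y j ^ (α j - 1)

variable {n : ℕ} {c t : ℝ}

theorem measurableSet_openSimplex : MeasurableSet (openSimplex n c) := by
  unfold openSimplex
  measurability

theorem measurable_simplexCoords_apply (j : Fin (n + 1)) :
    Measurable fun y : Fin n → ℝ => simplexCoords c y j := by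
  induction j using Fin.lastCases with
  | last => simp only [simplexCoords, Fin.snoc_last]; fun_prop
  | cast i => simpa [simplexCoords] using measurable_pi_apply i

theorem measurable_dirichletKernel (α : Fin (n + 1) → ℝ) : Measurable (dirichletKernel c α) :=
  Finset.measurable_prod _ fun j _ => (measurable_simplexCoords_apply j).pow_const _

theorem pos_of_mem_openSimplex {y : Fin n → ℝ} (hy : y ∈ openSimplex n c) : 0 < c :=
  (Finset.sum_nonneg fun i _ => (hy.1 i).le).trans_lt hy.2

theorem openSimplex_eq_empty (hc : c ≤ 0) : openSimplex n c = ∅ :=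
  eq_empty_of_forall_notMem fun _ hy => (pos_of_mem_openSimplex hy).not_ge hc

theorem simplexCoords_pos {y : Fin n → ℝ} (hy : y ∈ openSimplex n c) (j : Fin (n + 1)) :
    0 < simplexCoords c y j := by
  induction j using Fin.lastCases with
  | last => simpa [simplexCoords] using hy.2
  | cast i => simpa [simplexCoords] using hy.1 i

theorem simplexCoords_le {y : Fin n → ℝ} (hy : y ∈ openSimplex n c) (j : Fin (n + 1)) :
    simplexCoords c y j ≤ c := by
  have hsum : ∑ j, simplexCoords c y j = c := by simp [simplexCoords, Fin.sum_univ_castSucc]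
  exact (Finset.single_le_sum (fun j _ => (simplexCoords_pos hy j).le)
    (Finset.mem_univ j)).trans_eq hsum

theorem cons_mem_openSimplex_iff {z : Fin n → ℝ} :
    Fin.cons t z ∈ openSimplex (n + 1) c ↔ 0 < t ∧ z ∈ openSimplex n (c - t) := by
  simp only [openSimplex, mem_ofPred_eq, Fin.forall_fin_succ, Fin.cons_zero, Fin.cons_succ,
    Fin.sum_cons]
  rw [and_assoc, lt_sub_iff_add_lt']

theorem simplexCoords_cons (z : Fin n → ℝ) :
    simplexCoords c (Fin.cons t z) = Fin.cons t (simplexCoords (c - t) z) := by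
  rw [simplexCoords, simplexCoords, Fin.sum_cons, Fin.cons_snoc_eq_snoc_cons, sub_sub]

theorem dirichletKernel_cons (α : Fin (n + 2) → ℝ) (z : Fin n → ℝ) :
    dirichletKernel c α (Fin.cons t z)
      = t ^ (α 0 - 1) * dirichletKernel (c - t) (Fin.tail α) z := by
  simp only [dirichletKernel, simplexCoords_cons, Fin.prod_univ_succ, Fin.cons_zero, Fin.cons_succ,
    Fin.tail]

theorem lintegral_indicator_openSimplex_cons (α : Fin (n + 2) → ℝ) :
    ∫⁻ z, (openSimplex (n + 1) c).indicator (fun y => ENNReal.ofReal (dirichletKernel c α y))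
        (Fin.cons t z)
      = (Ioi 0).indicator (fun t => ENNReal.ofReal (t ^ (α 0 - 1)) *
          ∫⁻ z in openSimplex n (c - t),
            ENNReal.ofReal (dirichletKernel (c - t) (Fin.tail α) z)) t := by
  by_cases ht : 0 < t
  · rw [indicator_of_mem (mem_Ioi.2 ht), ← lintegral_const_mul' _ _ ENNReal.ofReal_ne_top,
      ← lintegral_indicator measurableSet_openSimplex]
    congr 1 with z
    by_cases hz : z ∈ openSimplex n (c - t)
    · rw [indicator_of_mem (cons_mem_openSimplex_iff.2 ⟨ht, hz⟩), indicator_of_mem hz,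
        dirichletKernel_cons, ENNReal.ofReal_mul (by positivity)]
    · rw [indicator_of_notMem (fun h => hz (cons_mem_openSimplex_iff.1 h).2),
        indicator_of_notMem hz]
  · rw [indicator_of_notMem (notMem_Ioi.2 (not_lt.1 ht))]
    simp [indicator_of_notMem (fun h => ht (cons_mem_openSimplex_iff.1 h).1)]

theorem lintegral_dirichletKernel (hc : 0 < c) {α : Fin (n + 1) → ℝ} (hα : ∀ i, 0 < α i) :
    ∫⁻ y in openSimplex n c, ENNReal.ofReal (dirichletKernel c α y)
      = ENNReal.ofReal (c ^ (∑ i, α i - 1) * multiBeta α) := by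
  induction n generalizing c with
  | zero =>
    have hS : openSimplex 0 c = univ := by simp [openSimplex, hc]
    simp [hS, dirichletKernel, simplexCoords, Fin.snoc_zero, multiBeta, volume_pi,
      (Gamma_pos_of_pos (hα 0)).ne']
  | succ n ih =>
    have htail : ∀ i, 0 < Fin.tail α i := fun i => hα _
    have hsum : 0 < ∑ i, Fin.tail α i := Finset.sum_pos (fun i _ => htail i) Finset.univ_nonempty
    have inner : ∀ t, ∫⁻ z, (openSimplex (n + 1) c).indicator
          (fun y => ENNReal.ofReal (dirichletKernel c α y)) (Fin.cons t z)
        = (Ioo 0 c).indicator (fun t => ENNReal.ofReal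
            (t ^ (α 0 - 1) * (c - t) ^ (∑ i, Fin.tail α i - 1)) *
              ENNReal.ofReal (multiBeta (Fin.tail α))) t := by
      intro t
      rw [lintegral_indicator_openSimplex_cons]
      by_cases ht : t ∈ Ioo 0 c
      · have h₀ := rpow_nonneg ht.1.le (α 0 - 1)
        have h₁ := rpow_nonneg (sub_pos.2 ht.2).le (∑ i, Fin.tail α i - 1)
        rw [indicator_of_mem (mem_Ioi.2 ht.1), indicator_of_mem ht, ih (sub_pos.2 ht.2) htail,
          ← ENNReal.ofReal_mul h₀, ← ENNReal.ofReal_mul (mul_nonneg h₀ h₁), mul_assoc]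
      · rw [indicator_of_notMem ht, indicator_apply]
        rcases not_and_or.1 ht with h | h
        · simp [h]
        · simp [openSimplex_eq_empty (sub_nonpos.2 (not_lt.1 h))]
    rw [← lintegral_indicator measurableSet_openSimplex,
      lintegral_fin_cons ((measurable_dirichletKernel α).ennreal_ofReal.indicator
        measurableSet_openSimplex)]
    simp_rw [inner]
    rw [lintegral_indicator measurableSet_Ioo, lintegral_mul_const' _ _ ENNReal.ofReal_ne_top,
      lintegral_rpow_mul_sub_rpow (hα 0) hsum hc, ← ENNReal.ofReal_mul' (multiBeta_pos htail).le,
      multiBeta_eq_mul_multiBeta_tail α (Gamma_pos_of_pos hsum).ne', Fin.sum_univ_succ α]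
    congr 1
    simp only [Fin.tail]
    ring

theorem dirichletKernel_pos {α : Fin (n + 1) → ℝ} {y : Fin n → ℝ}
    (hy : y ∈ openSimplex n c) :
    0 < dirichletKernel c α y :=
  Finset.prod_pos fun j _ => rpow_pos_of_pos (simplexCoords_pos hy j) _

theorem integral_dirichletKernel (hc : 0 < c) {α : Fin (n + 1) → ℝ} (hα : ∀ i, 0 < α i) :
    ∫ y in openSimplex n c, dirichletKernel c α y = c ^ (∑ i, α i - 1) * multiBeta α := by
  rw [integral_eq_lintegral_of_nonneg_ae, lintegral_dirichletKernel hc hα,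
    ENNReal.toReal_ofReal (mul_pos (rpow_pos_of_pos hc _) (multiBeta_pos hα)).le]
  · filter_upwards [ae_restrict_mem measurableSet_openSimplex] with y hy
    exact (dirichletKernel_pos hy).le
  · exact (measurable_dirichletKernel α).aestronglyMeasurable

theorem dirichletKernel_add_single {α : Fin (n + 1) → ℝ} {y : Fin n → ℝ}
    (hy : y ∈ openSimplex n c) (j : Fin (n + 1)) (t : ℝ) :
    dirichletKernel c (α + Pi.single j t) y = dirichletKernel c α y * simplexCoords c y j ^ t := by
  simp only [dirichletKernel, Pi.add_apply, add_sub_right_comm (α _),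
    rpow_add (simplexCoords_pos hy _), Finset.prod_mul_distrib]
  congr 1
  rw [Fintype.prod_eq_single j fun i hi => by simp [hi]]
  simp

theorem dirichletDensity_eq_of_mem {α : Fin (n + 1) → ℝ} {y : Fin n → ℝ}
    (hy : y ∈ openSimplex n 1) :
    dirichletDensity n α y = dirichletKernel 1 α y / multiBeta α := by
  rw [dirichletDensity, if_pos (show (∀ i, 0 < y i) ∧ ∑ i, y i < 1 from hy), dirichletKernel,
    multiBeta, Fin.prod_univ_castSucc fun j => simplexCoords 1 y j ^ (α j - 1)]
  simp only [simplexCoords, Fin.snoc_castSucc, Fin.snoc_last]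
  rw [div_eq_mul_inv _ (_ / _), inv_div]
  ring

theorem measurable_dirichletDensity (α : Fin (n + 1) → ℝ) :
    Measurable (dirichletDensity n α) :=
  Measurable.ite (measurableSet_openSimplex (c := 1)) (by fun_prop) measurable_const

theorem integral_dirichletDensity {α : Fin (n + 1) → ℝ} (hα : ∀ i, 0 < α i) :
    ∫ y in openSimplex n 1, dirichletDensity n α y = 1 := by
  rw [setIntegral_congr_fun measurableSet_openSimplex fun y hy => dirichletDensity_eq_of_mem hy,
    integral_div, integral_dirichletKernel one_pos hα, one_rpow, one_mul,
    div_self (multiBeta_pos hα).ne']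

theorem integral_dirichletDensity_mul_rpow {α : Fin (n + 1) → ℝ} (hα : ∀ i, 0 < α i)
    (j : Fin (n + 1)) {t : ℝ} (ht : 0 < α j + t) :
    ∫ y in openSimplex n 1, dirichletDensity n α y * simplexCoords 1 y j ^ t
      = Gamma (∑ i, α i) / Gamma (α j) * (Gamma (α j + t) / Gamma (∑ i, α i + t)) := by
  have hpos : ∀ i, 0 < (α + Pi.single j t : Fin (n + 1) → ℝ) i := fun i => by
    rcases eq_or_ne i j with rfl | h
    · simpa using ht
    · simpa [Pi.single_eq_of_ne h] using hα i
  rw [setIntegral_congr_fun measurableSet_openSimplex fun y hy => by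
      rw [dirichletDensity_eq_of_mem hy, div_mul_eq_mul_div, ← dirichletKernel_add_single hy],
    integral_div, integral_dirichletKernel one_pos hpos, one_rpow, one_mul,
    multiBeta_add_single α j t hα ht, mul_div_cancel_left₀ _ (multiBeta_pos hα).ne']
  ring

theorem integral_dirichletDensity_mul_log {α : Fin (n + 1) → ℝ} (hα : ∀ i, 0 < α i)
    (j : Fin (n + 1)) :
    IntegrableOn (fun y => dirichletDensity n α y * log (simplexCoords 1 y j))
        (openSimplex n 1) ∧
      ∫ y in openSimplex n 1, dirichletDensity n α y * log (simplexCoords 1 y j)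
        = digamma (α j) - digamma (∑ i, α i) := by
  have hαj : α j ≤ ∑ i, α i := Finset.single_le_sum (fun i _ => (hα i).le) (Finset.mem_univ j)
  have hsum : 0 < ∑ i, α i := (hα j).trans_le hαj
  have hmoment : ∀ t ∈ Ioi (-α j),
      ∫ y in openSimplex n 1, dirichletDensity n α y * simplexCoords 1 y j ^ t
        = Gamma (∑ i, α i) / Gamma (α j) * (Gamma (α j + t) / Gamma (∑ i, α i + t)) :=
    fun t ht => integral_dirichletDensity_mul_rpow hα j (neg_lt_iff_pos_add'.1 ht)
  have hw : ∀ᵐ y ∂volume.restrict (openSimplex n 1),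
      0 < simplexCoords 1 y j ∧ simplexCoords 1 y j ≤ 1 := by
    filter_upwards [ae_restrict_mem measurableSet_openSimplex] with y hy
    exact ⟨simplexCoords_pos hy j, simplexCoords_le hy j⟩
  have hmoment_pos : 0 < Gamma (∑ i, α i) / Gamma (α j) *
      (Gamma (α j + -(α j / 2)) / Gamma (∑ i, α i + -(α j / 2))) := by
    have := hα j
    have := Gamma_pos_of_pos (show 0 < α j + -(α j / 2) by linarith)
    have := Gamma_pos_of_pos (show 0 < ∑ i, α i + -(α j / 2) by linarith)
    positivity
  obtain ⟨hint, hderiv⟩ := hasDerivAt_integral_mul_rpow (w := fun y => simplexCoords 1 y j)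
    (measurable_dirichletDensity α).aestronglyMeasurable
    (measurable_simplexCoords_apply j).aemeasurable
    (hw.mono fun _ h => h.1) (hw.mono fun _ h => h.2) (half_pos (hα j))
    (.of_integral_ne_zero (by rw [hmoment _ (by simp [hα j])]; exact hmoment_pos.ne'))
  refine ⟨hint, hderiv.unique ?_⟩
  have := ((hasDerivAt_Gamma_add_div_Gamma_add (hα j) hsum).const_mul
    (Gamma (∑ i, α i) / Gamma (α j))).congr_of_eventuallyEq
    (Filter.eventually_of_mem (Ioi_mem_nhds (neg_neg_of_pos (hα j))) hmoment)
  convert this using 1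
  field_simp [(Gamma_pos_of_pos (hα j)).ne', (Gamma_pos_of_pos hsum).ne']

theorem log_dirichletKernel {α : Fin (n + 1) → ℝ} {y : Fin n → ℝ}
    (hy : y ∈ openSimplex n c) :
    log (dirichletKernel c α y) = ∑ j, (α j - 1) * log (simplexCoords c y j) := by
  rw [dirichletKernel, log_prod fun j _ => (rpow_pos_of_pos (simplexCoords_pos hy j) _).ne']
  exact Finset.sum_congr rfl fun j _ => log_rpow (simplexCoords_pos hy j) _

theorem log_dirichletDensity_div {α β : Fin (n + 1) → ℝ} (hα : ∀ i, 0 < α i) (hβ : ∀ i, 0 < β i)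
    {y : Fin n → ℝ} (hy : y ∈ openSimplex n 1) :
    log (dirichletDensity n α y / dirichletDensity n β y)
      = log (multiBeta β / multiBeta α) + ∑ j, (α j - β j) * log (simplexCoords 1 y j) := by
  have hK := fun γ : Fin (n + 1) → ℝ => (dirichletKernel_pos (α := γ) hy).ne'
  have hBα := (multiBeta_pos hα).ne'
  have hBβ := (multiBeta_pos hβ).ne'
  rw [dirichletDensity_eq_of_mem hy, dirichletDensity_eq_of_mem hy,
    log_div (div_ne_zero (hK α) hBα) (div_ne_zero (hK β) hBβ), log_div (hK α) hBα,
    log_div (hK β) hBβ, log_div hBβ hBα, log_dirichletKernel hy, log_dirichletKernel hy]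
  simp only [sub_mul, one_mul, Finset.sum_sub_distrib]
  ring

theorem dirichlet_kl_divergence_general (n : ℕ) (α β : Fin (n + 1) → ℝ)
    (hα : ∀ i, 0 < α i) (hβ : ∀ i, 0 < β i) :
    ∫ y in {y : Fin n → ℝ | (∀ i, 0 < y i) ∧ ∑ i, y i < 1},
        dirichletDensity n α y * Real.log (dirichletDensity n α y / dirichletDensity n β y)
      = Real.log (Real.Gamma (∑ i, α i) / Real.Gamma (∑ i, β i))
        + ∑ i, Real.log (Real.Gamma (β i) / Real.Gamma (α i))
        + ∑ i, (α i - β i) * (digamma (α i) - digamma (∑ i, α i)) := by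
  have hlog := integral_dirichletDensity_mul_log hα
  have hdens : IntegrableOn (dirichletDensity n α) (openSimplex n 1) :=
    .of_integral_ne_zero (by rw [integral_dirichletDensity hα]; exact one_ne_zero)
  change ∫ y in openSimplex n 1, _ = _
  have hpointwise : ∀ y ∈ openSimplex n 1,
      dirichletDensity n α y * log (dirichletDensity n α y / dirichletDensity n β y)
        = log (multiBeta β / multiBeta α) * dirichletDensity n α y
          + ∑ j, (α j - β j) * (dirichletDensity n α y * log (simplexCoords 1 y j)) := by
    intro y hy
    rw [log_dirichletDensity_div hα hβ hy, mul_add, Finset.mul_sum, mul_comm]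
    simp only [mul_left_comm (dirichletDensity n α y)]
  rw [setIntegral_congr_fun measurableSet_openSimplex hpointwise,
    integral_add (hdens.const_mul _) (integrable_finsetSum _ fun j _ => (hlog j).1.const_mul _),
    integral_const_mul, integral_dirichletDensity hα, mul_one,
    integral_finsetSum _ fun j _ => (hlog j).1.const_mul _, log_multiBeta_div hα hβ]
  simp only [integral_const_mul, (hlog _).2]

/-- Theorem 1: closed form for the Kullback–Leibler divergence between two
Dirichlet distributions. -/
theorem dirichlet_kl_divergence (n : ℕ) (hn : 1 ≤ n) (α β : Fin (n + 1) → ℝ)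
    (hα : ∀ i, 0 < α i) (hβ : ∀ i, 0 < β i) :
    ∫ y in {y : Fin n → ℝ | (∀ i, 0 < y i) ∧ ∑ i, y i < 1},
        dirichletDensity n α y * Real.log (dirichletDensity n α y / dirichletDensity n β y)
      = Real.log (Real.Gamma (∑ i, α i) / Real.Gamma (∑ i, β i))
        + ∑ i, Real.log (Real.Gamma (β i) / Real.Gamma (α i))
        + ∑ i, (α i - β i) * (digamma (α i) - digamma (∑ i, α i)) :=
  dirichlet_kl_divergence_general n α β hα hβ
end

section
/- Let n ≥ 1 be an integer and let α, β : Fin (n+1) → ℝ satisfy α i > 0 and β i > 0 for all i. Then the closed-form Dirichlet Kullback–Leibler expression is nonnegative: log (Γ(∑ i, α i) / Γ(∑ i, β i)) + ∑ i, log (Γ(β i) / Γ(α i)) + ∑ i, (α i − β i) · (ψ(α i) − ψ(∑ i, α i)) ≥ 0. -/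
open Real Set MeasureTheory ProbabilityTheory

theorem lintegral_rpow_mul_one_sub_rpow {s t : ℝ} (hs : 0 < s) (ht : 0 < t) :
    ∫⁻ x in Ioo (0 : ℝ) 1, ENNReal.ofReal (x ^ (s - 1) * (1 - x) ^ (t - 1))
      = ENNReal.ofReal (beta s t) := by
  have hB := beta_pos hs ht
  have hnorm := lintegral_betaPDF_eq_one hs ht
  simp only [lintegral_betaPDF, mul_assoc, ENNReal.ofReal_mul (one_div_pos.2 hB).le] at hnorm
  rw [lintegral_const_mul' _ _ ENNReal.ofReal_ne_top] at hnorm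
  calc _ = ENNReal.ofReal (beta s t * (1 / beta s t)) *
        ∫⁻ x in Ioo (0 : ℝ) 1, ENNReal.ofReal (x ^ (s - 1) * (1 - x) ^ (t - 1)) := by
        rw [mul_one_div_cancel hB.ne', ENNReal.ofReal_one, one_mul]
    _ = ENNReal.ofReal (beta s t) := by
        rw [ENNReal.ofReal_mul hB.le, mul_assoc, hnorm, mul_one]

theorem rpow_mul_one_sub_rpow_eq_rpow_mul_rpow {x s t s' t' a b : ℝ} (hx : x ∈ Ioo (0 : ℝ) 1)
    (hab : a + b = 1) :
    x ^ (a * s + b * s' - 1) * (1 - x) ^ (a * t + b * t' - 1)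
      = (x ^ (s - 1) * (1 - x) ^ (t - 1)) ^ a * (x ^ (s' - 1) * (1 - x) ^ (t' - 1)) ^ b := by
  have hx0 : 0 < x := hx.1
  have hx1 : 0 < 1 - x := sub_pos.2 hx.2
  rw [mul_rpow (by positivity) (by positivity), mul_rpow (by positivity) (by positivity),
    ← rpow_mul hx0.le, ← rpow_mul hx1.le, ← rpow_mul hx0.le, ← rpow_mul hx1.le]
  calc _ = x ^ ((s - 1) * a + (s' - 1) * b) * (1 - x) ^ ((t - 1) * a + (t' - 1) * b) := by
        congr 2 <;> linear_combination hab
    _ = _ := by rw [rpow_add hx0, rpow_add hx1]; ring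

theorem beta_mul_add_mul_le_rpow_beta_mul_rpow_beta {s t s' t' a b : ℝ} (hs : 0 < s) (ht : 0 < t)
    (hs' : 0 < s') (ht' : 0 < t') (ha : 0 < a) (hb : 0 < b) (hab : a + b = 1) :
    beta (a * s + b * s') (a * t + b * t') ≤ beta s t ^ a * beta s' t' ^ b := by
  have hB := beta_pos hs ht
  have hB' := beta_pos hs' ht'
  -- In `ℝ≥0∞`, Hölder's inequality holds without integrability side conditions.
  rw [← ENNReal.ofReal_le_ofReal_iff (by positivity),
    ← lintegral_rpow_mul_one_sub_rpow (by positivity) (by positivity),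
    ENNReal.ofReal_mul (by positivity), ← ENNReal.ofReal_rpow_of_nonneg hB.le ha.le,
    ← ENNReal.ofReal_rpow_of_nonneg hB'.le hb.le,
    ← lintegral_rpow_mul_one_sub_rpow hs ht, ← lintegral_rpow_mul_one_sub_rpow hs' ht']
  calc _ = ∫⁻ x in Ioo (0 : ℝ) 1, ENNReal.ofReal (x ^ (s - 1) * (1 - x) ^ (t - 1)) ^ a *
          ENNReal.ofReal (x ^ (s' - 1) * (1 - x) ^ (t' - 1)) ^ b := by
        refine setLIntegral_congr_fun measurableSet_Ioo fun x hx => ?_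
        have hx0 : 0 < x := hx.1
        have hx1 : 0 < 1 - x := sub_pos.2 hx.2
        rw [rpow_mul_one_sub_rpow_eq_rpow_mul_rpow hx hab, ENNReal.ofReal_mul (by positivity),
          ENNReal.ofReal_rpow_of_nonneg (by positivity) ha.le,
          ENNReal.ofReal_rpow_of_nonneg (by positivity) hb.le]
    _ ≤ _ := ENNReal.lintegral_mul_norm_pow_le (by fun_prop) (by fun_prop) ha.le hb.le hab

theorem convexOn_log_beta : ConvexOn ℝ (Ioi 0 ×ˢ Ioi 0) fun p : ℝ × ℝ => log (beta p.1 p.2) := by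
  refine convexOn_iff_forall_pos.2 ⟨(convex_Ioi 0).prod (convex_Ioi 0), ?_⟩
  rintro ⟨s, t⟩ ⟨hs : 0 < s, ht : 0 < t⟩ ⟨s', t'⟩ ⟨hs' : 0 < s', ht' : 0 < t'⟩ a b ha hb hab
  simp only [Prod.smul_mk, Prod.mk_add_mk, smul_eq_mul]
  calc log (beta (a * s + b * s') (a * t + b * t'))
      ≤ log (beta s t ^ a * beta s' t' ^ b) :=
        log_le_log (beta_pos (by positivity) (by positivity))
          (beta_mul_add_mul_le_rpow_beta_mul_rpow_beta hs ht hs' ht' ha hb hab)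
    _ = a * log (beta s t) + b * log (beta s' t') := by
        have := beta_pos hs ht; have := beta_pos hs' ht'
        rw [log_mul (by positivity) (by positivity), log_rpow (by positivity),
          log_rpow (by positivity)]

theorem log_beta {s t : ℝ} (hs : 0 < s) (ht : 0 < t) :
    log (beta s t) = log (Gamma s) + log (Gamma t) - log (Gamma (s + t)) := by
  have := Gamma_pos_of_pos hs; have := Gamma_pos_of_pos ht
  rw [beta, log_div (by positivity) (Gamma_pos_of_pos (add_pos hs ht)).ne',
    log_mul (by positivity) (by positivity)]

noncomputable def logMultiBeta {ι : Type*} (s : Finset ι) (x : ι → ℝ) : ℝ :=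
  ∑ i ∈ s, log (Gamma (x i)) - log (Gamma (∑ i ∈ s, x i))

theorem logMultiBeta_singleton {ι : Type*} (a : ι) (x : ι → ℝ) : logMultiBeta {a} x = 0 := by
  simp [logMultiBeta]

theorem logMultiBeta_cons {ι : Type*} {a : ι} {s : Finset ι} (h : a ∉ s) (x : ι → ℝ) :
    logMultiBeta (Finset.cons a s h) x
      = log (Gamma (x a)) + log (Gamma (∑ i ∈ s, x i)) - log (Gamma (x a + ∑ i ∈ s, x i))
        + logMultiBeta s x := by
  simp only [logMultiBeta, Finset.sum_cons]
  ring

theorem convexOn_logMultiBeta {ι : Type*} {s : Finset ι} (hs : s.Nonempty) :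
    ConvexOn ℝ (univ.pi fun _ => Ioi 0) (logMultiBeta s) := by
  have hpos : Convex ℝ (univ.pi fun (_ : ι) => Ioi (0 : ℝ)) :=
    convex_pi fun _ _ => convex_Ioi 0
  induction hs using Finset.Nonempty.cons_induction with
  | singleton a =>
    exact (convexOn_const 0 hpos).congr fun x _ => (logMultiBeta_singleton a x).symm
  | cons a s h hs ih =>
    let split : (ι → ℝ) →ₗ[ℝ] ℝ × ℝ := (LinearMap.proj a).prod
      (∑ i ∈ s, LinearMap.proj i)
    have hsplit : univ.pi (fun _ => Ioi 0) ⊆ split ⁻¹' (Ioi 0 ×ˢ Ioi 0) := fun x hx =>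
      ⟨hx a (mem_univ a), by
        simpa [split] using Finset.sum_pos (fun i _ => hx i (mem_univ i)) hs⟩
    refine ((convexOn_log_beta.comp_linearMap split).subset hsplit hpos).add ih |>.congr
      fun x hx => ?_
    have hxa : 0 < x a := hx a (mem_univ a)
    have hxs : 0 < ∑ i ∈ s, x i := Finset.sum_pos (fun i _ => hx i (mem_univ i)) hs
    simp [split, logMultiBeta_cons, log_beta hxa hxs]

theorem ConvexOn.add_le_of_hasDerivAt_add_smul {E : Type*} [AddCommGroup E] [Module ℝ E]
    {s : Set E} {f : E → ℝ} (hf : ConvexOn ℝ s f) {x y : E} (hx : x ∈ s) (hy : y ∈ s) {f' : ℝ}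
    (hf' : HasDerivAt (fun t : ℝ => f (x + t • (y - x))) f' 0) : f x + f' ≤ f y := by
  have hline : ConvexOn ℝ (Icc 0 1) fun t : ℝ => f (x + t • (y - x)) := by
    refine (hf.comp_affineMap (AffineMap.lineMap x y)).subset (fun t ht => ?_) (convex_Icc 0 1)
      |>.congr fun t _ => ?_
    · exact hf.1.lineMap_mem hx hy ht
    · simp [AffineMap.lineMap_apply_module', add_comm]
  have := hline.le_slope_of_hasDerivAt (by simp) (by simp) zero_lt_one hf'
  simp only [slope_def_field, sub_zero, div_one, one_smul, zero_smul, add_zero,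
    add_sub_cancel] at this
  linarith

theorem hasDerivAt_log_Gamma {x : ℝ} (hx : 0 < x) :
    HasDerivAt (fun t => log (Gamma t)) (digamma x) x := by
  have hGamma : DifferentiableAt ℝ Gamma x :=
    differentiableAt_Gamma fun m => by linarith [(m.cast_nonneg : (0 : ℝ) ≤ m)]
  exact (hGamma.log (Gamma_pos_of_pos hx).ne').hasDerivAt

theorem hasDerivAt_log_Gamma_add_mul {x : ℝ} (hx : 0 < x) (v : ℝ) :
    HasDerivAt (fun t => log (Gamma (x + t * v))) (digamma x * v) 0 := by
  have hline : HasDerivAt (fun t : ℝ => x + t * v) v 0 := by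
    simpa using ((hasDerivAt_id (0 : ℝ)).mul_const v).const_add x
  exact (hasDerivAt_log_Gamma hx).comp_of_eq 0 hline (by simp)

theorem hasDerivAt_logMultiBeta_add_smul {ι : Type*} {s : Finset ι} (hs : s.Nonempty)
    {x : ι → ℝ} (hx : ∀ i ∈ s, 0 < x i) (y : ι → ℝ) :
    HasDerivAt (fun t : ℝ => logMultiBeta s (x + t • (y - x)))
      (∑ i ∈ s, digamma (x i) * (y i - x i)
        - digamma (∑ i ∈ s, x i) * ∑ i ∈ s, (y i - x i)) 0 := by
  have hline : (fun t : ℝ => logMultiBeta s (x + t • (y - x))) = fun t =>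
      ∑ i ∈ s, log (Gamma (x i + t * (y i - x i)))
        - log (Gamma (∑ i ∈ s, x i + t * ∑ i ∈ s, (y i - x i))) := by
    ext t
    simp only [logMultiBeta, Pi.add_apply, Pi.smul_apply, Pi.sub_apply, smul_eq_mul,
      Finset.sum_add_distrib, Finset.mul_sum]
  rw [hline]
  exact (HasDerivAt.fun_sum fun i hi => hasDerivAt_log_Gamma_add_mul (hx i hi) _).sub
    (hasDerivAt_log_Gamma_add_mul (Finset.sum_pos hx hs) _)

theorem dirichlet_kl_nonneg_general (n : ℕ) (α β : Fin (n + 1) → ℝ)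
    (hα : ∀ i, 0 < α i) (hβ : ∀ i, 0 < β i) :
    Real.log (Real.Gamma (∑ i, α i) / Real.Gamma (∑ i, β i))
      + ∑ i, Real.log (Real.Gamma (β i) / Real.Gamma (α i))
      + ∑ i, (α i - β i) * (digamma (α i) - digamma (∑ i, α i)) ≥ 0 := by
  have tangent := (convexOn_logMultiBeta Finset.univ_nonempty).add_le_of_hasDerivAt_add_smul
    (fun i _ => hα i) (fun i _ => hβ i)
    (hasDerivAt_logMultiBeta_add_smul Finset.univ_nonempty (fun i _ => hα i) β)
  have hΓα := fun i => Gamma_pos_of_pos (hα i)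
  have hΓβ := fun i => Gamma_pos_of_pos (hβ i)
  have hΓSα := Gamma_pos_of_pos (Finset.sum_pos (fun i _ => hα i) Finset.univ_nonempty)
  have hΓSβ := Gamma_pos_of_pos (Finset.sum_pos (fun i _ => hβ i) Finset.univ_nonempty)
  have hdigamma : ∑ i, (α i - β i) * (digamma (α i) - digamma (∑ i, α i))
      = digamma (∑ i, α i) * ∑ i, (β i - α i) - ∑ i, digamma (α i) * (β i - α i) := by
    rw [Finset.mul_sum, ← Finset.sum_sub_distrib]
    exact Finset.sum_congr rfl fun i _ => by ring
  rw [log_div hΓSα.ne' hΓSβ.ne', Finset.sum_congr rfl fun i _ => log_div (hΓβ i).ne' (hΓα i).ne',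
    Finset.sum_sub_distrib, hdigamma]
  simp only [logMultiBeta] at tangent
  linarith

/-- Positivity of the closed-form Dirichlet Kullback–Leibler divergence. -/
theorem dirichlet_kl_nonneg (n : ℕ) (hn : 1 ≤ n) (α β : Fin (n + 1) → ℝ)
    (hα : ∀ i, 0 < α i) (hβ : ∀ i, 0 < β i) :
    Real.log (Real.Gamma (∑ i, α i) / Real.Gamma (∑ i, β i))
      + ∑ i, Real.log (Real.Gamma (β i) / Real.Gamma (α i))
      + ∑ i, (α i - β i) * (digamma (α i) - digamma (∑ i, α i)) ≥ 0 :=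
  dirichlet_kl_nonneg_general n α β hα hβ
end

section
/- Let n ≥ 1 be an integer and let α, β : Fin (n+1) → ℝ satisfy α i > 0 and β i > 0 for all i. Then log (Γ(∑ i, α i) / Γ(∑ i, β i)) + ∑ i, log (Γ(β i) / Γ(α i)) + ∑ i, (α i − β i) · (ψ(α i) − ψ(∑ i, α i)) = 0 if and only if α = β. -/
open Real Filter Topology Set

/-- The Hurwitz zeta function `ζ(p, x)`; by `hasDerivAt_digamma`, `hurwitzSeries 2` is the
trigamma function on `(0, ∞)`. -/
noncomputable def hurwitzSeries (p : ℕ) (x : ℝ) : ℝ := ∑' k : ℕ, 1 / (x + k) ^ p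

section Series

variable {p : ℕ} {x : ℝ} {g : ℕ → ℝ → ℝ} {c : ℝ}

theorem summable_one_div_add_pow (hx : 0 < x) (hp : 2 ≤ p) :
    Summable fun k : ℕ => 1 / (x + k) ^ p := by
  have := (Real.summable_one_div_nat_add_rpow x p).2 (by exact_mod_cast hp)
  refine this.congr fun k => ?_
  rw [abs_of_pos (by positivity), Real.rpow_natCast, add_comm]

theorem hasSum_hurwitzSeries (hx : 0 < x) (hp : 2 ≤ p) :
    HasSum (fun k : ℕ => 1 / (x + k) ^ p) (hurwitzSeries p x) :=
  (summable_one_div_add_pow hx hp).hasSum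

theorem hurwitzSeries_eq_add (hx : 0 < x) (hp : 2 ≤ p) :
    hurwitzSeries p x = 1 / x ^ p + hurwitzSeries p (x + 1) := by
  rw [hurwitzSeries, (summable_one_div_add_pow hx hp).tsum_eq_zero_add, hurwitzSeries]
  push_cast
  simp only [add_zero, add_assoc, add_comm (1 : ℝ)]

theorem one_div_pow_le_hurwitzSeries (hx : 0 < x) (hp : 2 ≤ p) :
    1 / x ^ p ≤ hurwitzSeries p x := by
  simpa using le_hasSum (hasSum_hurwitzSeries hx hp) 0 fun k _ => by positivity

theorem hurwitzSeries_pos (hx : 0 < x) (hp : 2 ≤ p) : 0 < hurwitzSeries p x :=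
  (by positivity : (0 : ℝ) < 1 / x ^ p).trans_le (one_div_pow_le_hurwitzSeries hx hp)

theorem hasSum_sub_succ_of_antitone {u : ℕ → ℝ} (hu : Antitone u)
    (h : Tendsto u atTop (𝓝 0)) : HasSum (fun k => u k - u (k + 1)) (u 0) := by
  rw [hasSum_iff_tendsto_nat_of_nonneg fun k => sub_nonneg.2 (hu k.le_succ)]
  simp_rw [Finset.sum_range_sub']
  simpa using tendsto_const_nhds.sub h

theorem hasSum_one_div_pow_sub (hx : 0 < x) (hp : p ≠ 0) :
    HasSum (fun k : ℕ => 1 / (x + k) ^ p - 1 / (x + k + 1) ^ p) (1 / x ^ p) := by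
  have hanti : Antitone fun k : ℕ => 1 / (x + k) ^ p := fun j k hjk => by
    dsimp only
    gcongr
  have hlim : Tendsto (fun k : ℕ => 1 / (x + k) ^ p) atTop (𝓝 0) := by
    simp_rw [one_div, ← inv_pow]
    simpa [zero_pow hp] using
      ((tendsto_atTop_add_const_left _ x tendsto_natCast_atTop_atTop).inv_tendsto_atTop.pow p)
  simpa [add_assoc] using hasSum_sub_succ_of_antitone hanti hlim

theorem norm_div_add_pow_le {a y : ℝ} (ha : 0 < a) (hy : y ∈ Ioi a) (k : ℕ) :
    ‖c / (y + k) ^ p‖ ≤ |c| * (1 / (a + k) ^ p) := by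
  have hay : a + k ≤ y + k := by linarith [mem_Ioi.1 hy]
  rw [norm_div, norm_pow, Real.norm_eq_abs, Real.norm_eq_abs,
    abs_of_pos (show 0 < y + k by linarith), ← div_eq_mul_one_div]
  gcongr

theorem summable_of_hasDerivAt_div_pow (hp : 2 ≤ p)
    (hg : ∀ k, ∀ y > 0, HasDerivAt (g k) (c / (y + k) ^ p) y)
    (h₁ : Summable fun k => g k 1) (hx : 0 < x) : Summable fun k => g k x := by
  have ha : min x 1 / 2 < min x 1 := half_lt_self (lt_min hx one_pos)
  exact summable_of_summable_hasDerivAt_of_isPreconnected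
    ((summable_one_div_add_pow (by positivity) hp).mul_left |c|) isOpen_Ioi isPreconnected_Ioi
    (fun k y hy => hg k y (lt_trans (by positivity) hy))
    (fun k y hy => norm_div_add_pow_le (by positivity) hy k)
    (ha.trans_le (min_le_right x 1)) h₁ (ha.trans_le (min_le_left x 1))

theorem hasDerivAt_tsum_of_hasDerivAt_div_pow (hp : 2 ≤ p)
    (hg : ∀ k, ∀ y > 0, HasDerivAt (g k) (c / (y + k) ^ p) y)
    (h₁ : Summable fun k => g k 1) (hx : 0 < x) :
    HasDerivAt (fun y => ∑' k, g k y) (∑' k : ℕ, c / (x + k) ^ p) x := by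
  have ha : min x 1 / 2 < min x 1 := half_lt_self (lt_min hx one_pos)
  exact hasDerivAt_tsum_of_isPreconnected
    ((summable_one_div_add_pow (by positivity) hp).mul_left |c|) isOpen_Ioi isPreconnected_Ioi
    (fun k y hy => hg k y (lt_trans (by positivity) hy))
    (fun k y hy => norm_div_add_pow_le (by positivity) hy k)
    (ha.trans_le (min_le_right x 1)) h₁ (ha.trans_le (min_le_left x 1))

theorem hasDerivAt_one_div_add_pow (k : ℕ) {y : ℝ} (hy : 0 < y) :
    HasDerivAt (fun y : ℝ => 1 / (y + k) ^ p) (-(p : ℝ) / (y + k) ^ (p + 1)) y := by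
  have hyk : y + k ≠ 0 := by positivity
  have h := ((hasDerivAt_id y).add_const (k : ℝ)).fun_pow p |>.fun_inv (pow_ne_zero p hyk)
  simp only [id, one_div] at h ⊢
  refine h.congr_deriv ?_
  rcases p with _ | q
  · simp
  · simp only [Nat.add_sub_cancel, Nat.cast_add, Nat.cast_one]
    field_simp
    ring

theorem hasDerivAt_hurwitzSeries (hp : 2 ≤ p) (hx : 0 < x) :
    HasDerivAt (hurwitzSeries p) (-p * hurwitzSeries (p + 1) x) x := by
  have h := hasDerivAt_tsum_of_hasDerivAt_div_pow (by omega)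
    (fun k y hy => hasDerivAt_one_div_add_pow k hy) (summable_one_div_add_pow one_pos hp) hx
  simp_rw [neg_div, tsum_neg, div_eq_mul_one_div (p : ℝ), tsum_mul_left, ← neg_mul] at h
  exact h

end Series

section Digamma

variable {x : ℝ}

theorem differentiableAt_log_Gamma (hx : 0 < x) :
    DifferentiableAt ℝ (fun t => log (Gamma t)) x :=
  (differentiableAt_Gamma fun m => by linarith [(m.cast_nonneg : (0 : ℝ) ≤ m)]).log
    (Gamma_pos_of_pos hx).ne'

theorem digamma_add_one (hx : 0 < x) : digamma (x + 1) = digamma x + 1 / x := by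
  have hrec : (fun y => log (Gamma (y + 1))) =ᶠ[𝓝 x] fun y => log (Gamma y) + log y := by
    filter_upwards [eventually_gt_nhds hx] with y hy
    rw [Gamma_add_one hy.ne', log_mul hy.ne' (Gamma_pos_of_pos hy).ne', add_comm]
  rw [digamma, ← deriv_comp_add_const, hrec.deriv_eq,
    deriv_fun_add (differentiableAt_log_Gamma hx) (differentiableAt_log hx.ne'), deriv_log,
    digamma, one_div]

theorem digamma_add_nat (hx : 0 < x) (N : ℕ) :
    digamma (x + N) = digamma x + ∑ k ∈ Finset.range N, 1 / (x + k) := by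
  induction N with
  | zero => simp
  | succ N ih =>
    rw [Nat.cast_succ, ← add_assoc, digamma_add_one (by positivity), ih, Finset.sum_range_succ,
      add_assoc]

theorem log_le_digamma_add_one (hx : 0 < x) : log x ≤ digamma (x + 1) := by
  have h := convexOn_log_Gamma.slope_le_deriv (mem_Ioi.2 hx) (mem_Ioi.2 (by linarith : 0 < x + 1))
    (by linarith) (differentiableAt_log_Gamma (by linarith))
  rwa [slope_def_field, add_sub_cancel_left, div_one, Function.comp_apply, Function.comp_apply,
    Gamma_add_one hx.ne', log_mul hx.ne' (Gamma_pos_of_pos hx).ne', add_sub_cancel_right] at h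

theorem digamma_add_one_le_log (hx : 0 < x) : digamma (x + 1) ≤ log (x + 1) := by
  have hx₁ : 0 < x + 1 := by linarith
  have h := convexOn_log_Gamma.deriv_le_slope (mem_Ioi.2 hx₁)
    (mem_Ioi.2 (by linarith : 0 < x + 1 + 1)) (by linarith) (differentiableAt_log_Gamma hx₁)
  rwa [slope_def_field, add_sub_cancel_left, div_one, Function.comp_apply, Function.comp_apply,
    Gamma_add_one hx₁.ne', log_mul hx₁.ne' (Gamma_pos_of_pos hx₁).ne', add_sub_cancel_right] at h

theorem tendsto_digamma_sub_log : Tendsto (fun y => digamma y - log y) atTop (𝓝 0) := by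
  have hlow : Tendsto (fun y => log (y + -1) - log y) atTop (𝓝 0) :=
    tendsto_log_comp_add_sub_log (-1)
  refine tendsto_of_tendsto_of_tendsto_of_le_of_le' hlow tendsto_const_nhds ?_ ?_
  · filter_upwards [eventually_gt_atTop 1] with y hy
    have := log_le_digamma_add_one (by linarith : 0 < y - 1)
    rw [sub_add_cancel] at this
    rw [← sub_eq_add_neg]
    linarith
  · filter_upwards [eventually_gt_atTop 1] with y hy
    have := digamma_add_one_le_log (by linarith : 0 < y - 1)
    rw [sub_add_cancel] at this
    linarith

theorem tendsto_digamma_add_sub_digamma (c : ℝ) :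
    Tendsto (fun y => digamma (y + c) - digamma y) atTop (𝓝 0) := by
  have h := ((tendsto_digamma_sub_log.comp (tendsto_atTop_add_const_right _ c tendsto_id)).add
    (tendsto_log_comp_add_sub_log c)).sub tendsto_digamma_sub_log
  simp only [add_zero, sub_zero] at h
  refine h.congr fun y => ?_
  simp only [Function.comp_apply, id]
  ring

theorem hasDerivAt_const_sub_one_div_add (c : ℝ) (k : ℕ) {y : ℝ} (hy : 0 < y) :
    HasDerivAt (fun y : ℝ => c - 1 / (y + k)) (1 / (y + k) ^ 2) y := by
  simpa [neg_div] using (hasDerivAt_one_div_add_pow (p := 1) k hy).const_sub c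

theorem hasSum_digamma_sub_digamma_one (hx : 0 < x) :
    HasSum (fun k : ℕ => 1 / (1 + k) - 1 / (x + k)) (digamma x - digamma 1) := by
  have hs := summable_of_hasDerivAt_div_pow le_rfl
    (fun k y hy => hasDerivAt_const_sub_one_div_add (1 / (1 + k)) k hy) (by simp) hx
  refine hs.hasSum_iff.2 (tendsto_nhds_unique hs.hasSum.tendsto_sum_nat ?_)
  -- the `N`-th partial sum is `ψ x - ψ 1 - (ψ (x + N) - ψ (1 + N))`
  have h := (tendsto_digamma_add_sub_digamma (x - 1)).comp
    (tendsto_atTop_add_const_left _ 1 tendsto_natCast_atTop_atTop)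
  have h' := (tendsto_const_nhds (x := digamma x - digamma 1)).sub h
  rw [sub_zero] at h'
  refine h'.congr fun N => ?_
  simp only [Function.comp_apply, Finset.sum_sub_distrib]
  rw [show 1 + (N : ℝ) + (x - 1) = x + N by ring, digamma_add_nat hx, digamma_add_nat one_pos]
  ring

theorem hasDerivAt_digamma (hx : 0 < x) : HasDerivAt digamma (hurwitzSeries 2 x) x := by
  have h := (hasDerivAt_tsum_of_hasDerivAt_div_pow le_rfl
    (fun k y hy => hasDerivAt_const_sub_one_div_add (1 / (1 + k)) k hy) (by simp) hx).const_add
    (digamma 1)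
  refine h.congr_of_eventuallyEq ?_
  filter_upwards [eventually_gt_nhds hx] with y hy
  rw [(hasSum_digamma_sub_digamma_one hy).tsum_eq]
  ring

end Digamma

section Inequalities

variable {x : ℝ}

theorem hasSum_one_div_sub (hx : 0 < x) :
    HasSum (fun k : ℕ => 1 / (x + k) - 1 / (x + k + 1)) (1 / x) := by
  simpa using hasSum_one_div_pow_sub hx one_ne_zero

theorem hurwitzSeries_two_lt_one_div_add (hx : 0 < x) :
    hurwitzSeries 2 x < 1 / x + hurwitzSeries 3 x := by
  have hterm {t : ℝ} (ht : 0 < t) : 1 / t ^ 2 < 1 / t - 1 / (t + 1) + 1 / t ^ 3 := by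
    rw [← sub_pos]
    field_simp
    ring_nf
    positivity
  exact hasSum_lt (i := 0) (fun k => (hterm (by positivity)).le) (by simpa using hterm hx)
    (hasSum_hurwitzSeries hx le_rfl)
    ((hasSum_one_div_sub hx).add (hasSum_hurwitzSeries hx (by norm_num)))

theorem hurwitzSeries_two_add_one_lt (hx : 0 < x) : hurwitzSeries 2 (x + 1) < 1 / x := by
  have hterm {t : ℝ} (ht : 0 < t) : 1 / (t + 1) ^ 2 < 1 / t - 1 / (t + 1) := by
    rw [← sub_pos]
    field_simp
    ring_nf
    positivity
  refine hasSum_lt (f := fun k : ℕ => 1 / (x + 1 + k) ^ 2) (i := 0) (fun k => ?_) ?_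
    (hasSum_hurwitzSeries (by linarith) le_rfl) (hasSum_one_div_sub hx)
  · simpa [add_right_comm] using (hterm (by positivity : 0 < x + k)).le
  · simpa using hterm hx

theorem le_hurwitzSeries_three (hx : 0 < x) :
    1 / (2 * x ^ 2) + 1 / (2 * x ^ 3) ≤ hurwitzSeries 3 x := by
  have hterm {t : ℝ} (ht : 0 < t) :
      1 / 2 * (1 / t ^ 2 - 1 / (t + 1) ^ 2) + 1 / 2 * (1 / t ^ 3 - 1 / (t + 1) ^ 3)
        ≤ 1 / t ^ 3 := by
    rw [← sub_nonneg]
    field_simp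
    ring_nf
    positivity
  have h := (((hasSum_one_div_pow_sub hx two_ne_zero).mul_left (1 / 2)).add
    ((hasSum_one_div_pow_sub hx three_ne_zero).mul_left (1 / 2)))
  calc 1 / (2 * x ^ 2) + 1 / (2 * x ^ 3) = 1 / 2 * (1 / x ^ 2) + 1 / 2 * (1 / x ^ 3) := by ring
    _ ≤ hurwitzSeries 3 x :=
      hasSum_le (fun k => hterm (by positivity)) h (hasSum_hurwitzSeries hx (by norm_num))

theorem hurwitzSeries_two_lt_mul_hurwitzSeries_three (hx : 0 < x) :
    hurwitzSeries 2 x < 2 * x * hurwitzSeries 3 x := by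
  rcases le_or_gt 1 x with h1 | h1
  · calc hurwitzSeries 2 x < 1 / x + hurwitzSeries 3 x := hurwitzSeries_two_lt_one_div_add hx
      _ ≤ (2 * x - 1) * (1 / (2 * x ^ 2) + 1 / (2 * x ^ 3)) + hurwitzSeries 3 x := by
        gcongr
        rw [← sub_nonneg]
        field_simp
        ring_nf
        nlinarith
      _ ≤ (2 * x - 1) * hurwitzSeries 3 x + hurwitzSeries 3 x := by
        gcongr
        · linarith
        · exact le_hurwitzSeries_three hx
      _ = 2 * x * hurwitzSeries 3 x := by ring
  · calc hurwitzSeries 2 x = 1 / x ^ 2 + hurwitzSeries 2 (x + 1) := hurwitzSeries_eq_add hx le_rfl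
      _ < 1 / x ^ 2 + 1 / x := by gcongr; exact hurwitzSeries_two_add_one_lt hx
      _ ≤ 2 * x * (1 / x ^ 3) := by
        rw [← sub_nonneg]
        field_simp
        linarith
      _ ≤ 2 * x * hurwitzSeries 3 x := by
        gcongr
        exact one_div_pow_le_hurwitzSeries hx (by norm_num)

theorem strictAntiOn_mul_hurwitzSeries_two :
    StrictAntiOn (fun x => x * hurwitzSeries 2 x) (Ioi 0) := by
  have hderiv {x : ℝ} (hx : 0 < x) : HasDerivAt (fun x => x * hurwitzSeries 2 x)
      (hurwitzSeries 2 x - 2 * x * hurwitzSeries 3 x) x := by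
    refine ((hasDerivAt_id' x).fun_mul (hasDerivAt_hurwitzSeries le_rfl hx)).congr_deriv ?_
    norm_num
    ring
  refine strictAntiOn_of_deriv_neg (convex_Ioi 0)
    (fun x hx => (hderiv hx).continuousAt.continuousWithinAt) fun x hx => ?_
  rw [interior_Ioi] at hx
  rw [(hderiv hx).deriv, sub_neg]
  exact hurwitzSeries_two_lt_mul_hurwitzSeries_three hx

theorem hurwitzSeries_two_add_mul_lt {y : ℝ} (hx : 0 < x) (hy : 0 < y) :
    hurwitzSeries 2 (x + y) * (hurwitzSeries 2 x + hurwitzSeries 2 y)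
      < hurwitzSeries 2 x * hurwitzSeries 2 y := by
  have hxy : 0 < x + y := add_pos hx hy
  have hx' : (x + y) * hurwitzSeries 2 (x + y) < x * hurwitzSeries 2 x :=
    strictAntiOn_mul_hurwitzSeries_two hx hxy (by linarith)
  have hy' : (x + y) * hurwitzSeries 2 (x + y) < y * hurwitzSeries 2 y :=
    strictAntiOn_mul_hurwitzSeries_two hy hxy (by linarith)
  have := hurwitzSeries_pos hx le_rfl
  have := hurwitzSeries_pos hy le_rfl
  refine lt_of_mul_lt_mul_left ?_ hxy.le
  nlinarith

theorem hurwitzSeries_two_add_mul_sq_lt {y v w : ℝ} (hx : 0 < x) (hy : 0 < y)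
    (hvw : v ≠ 0 ∨ w ≠ 0) :
    hurwitzSeries 2 (x + y) * (v + w) ^ 2
      < hurwitzSeries 2 x * v ^ 2 + hurwitzSeries 2 y * w ^ 2 := by
  set p := hurwitzSeries 2 x
  set q := hurwitzSeries 2 y
  set r := hurwitzSeries 2 (x + y)
  have hp : 0 < p := hurwitzSeries_pos hx le_rfl
  have hq : 0 < q := hurwitzSeries_pos hy le_rfl
  have hr : 0 < r := hurwitzSeries_pos (add_pos hx hy) le_rfl
  have hrpq : r * (p + q) < p * q := hurwitzSeries_two_add_mul_lt hx hy
  have hQ : 0 < p * v ^ 2 + q * w ^ 2 := by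
    rcases hvw with hv | hw <;> positivity
  -- Cauchy–Schwarz: `p q (v + w)² ≤ (p + q)(p v² + q w²)`, with defect `(p v - q w)²`
  have hcs : p * q * (v + w) ^ 2 ≤ (p + q) * (p * v ^ 2 + q * w ^ 2) := by
    nlinarith [sq_nonneg (p * v - q * w)]
  refine lt_of_mul_lt_mul_left ?_ (mul_pos hp hq).le
  nlinarith [mul_lt_mul_of_pos_right hrpq hQ, mul_le_mul_of_nonneg_left hcs hr.le]

end Inequalities

theorem deriv_lt_slope_of_second_deriv_pos {f f' f'' : ℝ → ℝ} {a b : ℝ} (hab : a < b)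
    (hf : ∀ t ∈ Icc a b, HasDerivAt f (f' t) t) (hf' : ∀ t ∈ Icc a b, HasDerivAt f' (f'' t) t)
    (hf'' : ∀ t ∈ Icc a b, 0 < f'' t) : f' a < (f b - f a) / (b - a) := by
  have hmono : StrictMonoOn f' (Icc a b) :=
    strictMonoOn_of_deriv_pos (convex_Icc a b)
      (fun t ht => (hf' t ht).continuousAt.continuousWithinAt) fun t ht => by
        rw [interior_Icc] at ht
        rw [(hf' t (Ioo_subset_Icc_self ht)).deriv]
        exact hf'' t (Ioo_subset_Icc_self ht)
  obtain ⟨c, hc, hslope⟩ := exists_hasDerivAt_eq_slope f f' hab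
    (fun t ht => (hf t ht).continuousAt.continuousWithinAt)
    fun t ht => hf t (Ioo_subset_Icc_self ht)
  rw [← hslope]
  exact hmono (left_mem_Icc.2 hab.le) (Ioo_subset_Icc_self hc) hc.1

theorem add_mul_sub_pos {a b t : ℝ} (ha : 0 < a) (hb : 0 < b) (ht : t ∈ Icc (0 : ℝ) 1) :
    0 < a + t * (b - a) :=
  (convex_Ioi (0 : ℝ)).add_smul_sub_mem ha hb ht

theorem hasDerivAt_comp_segment {F F' : ℝ → ℝ} (hF : ∀ x, 0 < x → HasDerivAt F (F' x) x)
    {a b t : ℝ} (ha : 0 < a) (hb : 0 < b) (ht : t ∈ Icc (0 : ℝ) 1) :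
    HasDerivAt (fun s => F (a + s * (b - a))) ((b - a) * F' (a + t * (b - a))) t := by
  have hpos : 0 < a + t * (b - a) := add_mul_sub_pos ha hb ht
  refine ((hF _ hpos).comp t (((hasDerivAt_id' t).mul_const (b - a)).const_add a)).congr_deriv ?_
  ring

noncomputable def logGammaBregman (b a : ℝ) : ℝ :=
  log (Gamma b) - log (Gamma a) - (b - a) * digamma a

theorem logGammaBregman_self (a : ℝ) : logGammaBregman a a = 0 := by
  simp [logGammaBregman]

theorem logGammaBregman_add_lt_add {a₁ a₂ b₁ b₂ : ℝ} (ha₁ : 0 < a₁) (ha₂ : 0 < a₂) (hb₁ : 0 < b₁)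
    (hb₂ : 0 < b₂) (hne : a₁ ≠ b₁ ∨ a₂ ≠ b₂) :
    logGammaBregman (b₁ + b₂) (a₁ + a₂) < logGammaBregman b₁ a₁ + logGammaBregman b₂ a₂ := by
  set a := a₁ + a₂
  set b := b₁ + b₂
  have ha : 0 < a := add_pos ha₁ ha₂
  have hb : 0 < b := add_pos hb₁ hb₂
  have hL (x : ℝ) (hx : 0 < x) : HasDerivAt (fun t => log (Gamma t)) (digamma x) x :=
    (differentiableAt_log_Gamma hx).hasDerivAt
  have hψ (x : ℝ) (hx : 0 < x) : HasDerivAt digamma (hurwitzSeries 2 x) x :=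
    hasDerivAt_digamma hx
  -- the logarithm of the Beta function along the segment from `(a₁, a₂)` to `(b₁, b₂)`
  let f (s : ℝ) : ℝ := log (Gamma (a₁ + s * (b₁ - a₁))) + log (Gamma (a₂ + s * (b₂ - a₂)))
    - log (Gamma (a + s * (b - a)))
  let f' (s : ℝ) : ℝ := (b₁ - a₁) * digamma (a₁ + s * (b₁ - a₁))
    + (b₂ - a₂) * digamma (a₂ + s * (b₂ - a₂)) - (b - a) * digamma (a + s * (b - a))
  let f'' (s : ℝ) : ℝ := (b₁ - a₁) * ((b₁ - a₁) * hurwitzSeries 2 (a₁ + s * (b₁ - a₁)))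
    + (b₂ - a₂) * ((b₂ - a₂) * hurwitzSeries 2 (a₂ + s * (b₂ - a₂)))
    - (b - a) * ((b - a) * hurwitzSeries 2 (a + s * (b - a)))
  have hf : ∀ t ∈ Icc (0 : ℝ) 1, HasDerivAt f (f' t) t := fun t ht =>
    ((hasDerivAt_comp_segment hL ha₁ hb₁ ht).add (hasDerivAt_comp_segment hL ha₂ hb₂ ht)).sub
      (hasDerivAt_comp_segment hL ha hb ht)
  have hf' : ∀ t ∈ Icc (0 : ℝ) 1, HasDerivAt f' (f'' t) t := fun t ht =>
    (((hasDerivAt_comp_segment hψ ha₁ hb₁ ht).const_mul _).add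
      ((hasDerivAt_comp_segment hψ ha₂ hb₂ ht).const_mul _)).sub
      ((hasDerivAt_comp_segment hψ ha hb ht).const_mul _)
  have hf'' : ∀ t ∈ Icc (0 : ℝ) 1, 0 < f'' t := fun t ht => by
    have h := hurwitzSeries_two_add_mul_sq_lt (v := b₁ - a₁) (w := b₂ - a₂)
      (add_mul_sub_pos ha₁ hb₁ ht) (add_mul_sub_pos ha₂ hb₂ ht)
      (by rcases hne with h | h; exacts [.inl (sub_ne_zero.2 h.symm), .inr (sub_ne_zero.2 h.symm)])
    rw [show a₁ + t * (b₁ - a₁) + (a₂ + t * (b₂ - a₂)) = a + t * (b - a) by ring,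
      show b₁ - a₁ + (b₂ - a₂) = b - a by ring] at h
    simp only [f'']
    linarith
  have key := deriv_lt_slope_of_second_deriv_pos one_pos hf hf' hf''
  simp only [f, f', zero_mul, one_mul, add_zero, add_sub_cancel, sub_zero, div_one] at key
  simp only [logGammaBregman]
  linarith

theorem logGammaBregman_add_le_add {a₁ a₂ b₁ b₂ : ℝ} (ha₁ : 0 < a₁) (ha₂ : 0 < a₂) (hb₁ : 0 < b₁)
    (hb₂ : 0 < b₂) :
    logGammaBregman (b₁ + b₂) (a₁ + a₂) ≤ logGammaBregman b₁ a₁ + logGammaBregman b₂ a₂ := by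
  by_cases h : a₁ = b₁ ∧ a₂ = b₂
  · simp [h.1, h.2, logGammaBregman_self]
  · exact (logGammaBregman_add_lt_add ha₁ ha₂ hb₁ hb₂ (not_and_or.1 h)).le

section DirichletKL

variable {ι : Type*} [DecidableEq ι] {s : Finset ι} {α β : ι → ℝ} {i : ι}

noncomputable def dirichletKL (s : Finset ι) (α β : ι → ℝ) : ℝ :=
  ∑ i ∈ s, logGammaBregman (β i) (α i) - logGammaBregman (∑ i ∈ s, β i) (∑ i ∈ s, α i)

theorem dirichletKL_insert (hi : i ∉ s) :
    dirichletKL (insert i s) α β = dirichletKL s α β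
      + (logGammaBregman (β i) (α i) + logGammaBregman (∑ j ∈ s, β j) (∑ j ∈ s, α j)
        - logGammaBregman (β i + ∑ j ∈ s, β j) (α i + ∑ j ∈ s, α j)) := by
  simp only [dirichletKL, Finset.sum_insert hi]
  ring

theorem dirichletKL_nonneg (hα : ∀ i ∈ s, 0 < α i) (hβ : ∀ i ∈ s, 0 < β i) :
    0 ≤ dirichletKL s α β := by
  induction s using Finset.induction_on with
  | empty => simp [dirichletKL, logGammaBregman_self]
  | insert i s hi ih =>
    have hα' : ∀ j ∈ s, 0 < α j := fun j hj => hα j (Finset.mem_insert_of_mem hj)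
    have hβ' : ∀ j ∈ s, 0 < β j := fun j hj => hβ j (Finset.mem_insert_of_mem hj)
    rcases s.eq_empty_or_nonempty with rfl | hs
    · simp [dirichletKL]
    rw [dirichletKL_insert hi]
    have := logGammaBregman_add_le_add (hα i (s.mem_insert_self i)) (Finset.sum_pos hα' hs)
      (hβ i (s.mem_insert_self i)) (Finset.sum_pos hβ' hs)
    linarith [ih hα' hβ']

theorem eq_of_dirichletKL_eq_zero (hα : ∀ i ∈ s, 0 < α i) (hβ : ∀ i ∈ s, 0 < β i)
    (hs : s.Nontrivial) (hi : i ∈ s) (h : dirichletKL s α β = 0) : α i = β i := by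
  have hs' : (s.erase i).Nonempty := hs.erase_nonempty
  have hα' : ∀ j ∈ s.erase i, 0 < α j := fun j hj => hα j (Finset.mem_of_mem_erase hj)
  have hβ' : ∀ j ∈ s.erase i, 0 < β j := fun j hj => hβ j (Finset.mem_of_mem_erase hj)
  rw [← Finset.insert_erase hi, dirichletKL_insert (s.notMem_erase i)] at h
  by_contra hne
  have := logGammaBregman_add_lt_add (hα i hi) (Finset.sum_pos hα' hs') (hβ i hi)
    (Finset.sum_pos hβ' hs') (.inl hne)
  linarith [dirichletKL_nonneg hα' hβ']

end DirichletKL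

/-- Self-identification: the closed-form Dirichlet Kullback–Leibler divergence
vanishes iff the parameter vectors coincide. -/
theorem dirichlet_kl_eq_zero_iff (n : ℕ) (hn : 1 ≤ n) (α β : Fin (n + 1) → ℝ)
    (hα : ∀ i, 0 < α i) (hβ : ∀ i, 0 < β i) :
    Real.log (Real.Gamma (∑ i, α i) / Real.Gamma (∑ i, β i))
        + ∑ i, Real.log (Real.Gamma (β i) / Real.Gamma (α i))
        + ∑ i, (α i - β i) * (digamma (α i) - digamma (∑ i, α i)) = 0
      ↔ α = β := by
  have hΓ {x : ℝ} (hx : 0 < x) : Gamma x ≠ 0 := (Gamma_pos_of_pos hx).ne'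
  have hsum : Real.log (Real.Gamma (∑ i, α i) / Real.Gamma (∑ i, β i))
        + ∑ i, Real.log (Real.Gamma (β i) / Real.Gamma (α i))
        + ∑ i, (α i - β i) * (digamma (α i) - digamma (∑ i, α i))
      = dirichletKL Finset.univ α β := by
    rw [log_div (hΓ (Finset.sum_pos (fun i _ => hα i) Finset.univ_nonempty))
      (hΓ (Finset.sum_pos (fun i _ => hβ i) Finset.univ_nonempty))]
    simp only [fun i => log_div (hΓ (hβ i)) (hΓ (hα i)), dirichletKL, logGammaBregman, mul_sub,
      sub_mul, Finset.sum_sub_distrib, ← Finset.sum_mul]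
    ring
  have hnt : (Finset.univ : Finset (Fin (n + 1))).Nontrivial :=
    Finset.univ_nontrivial_iff.2 (Fin.nontrivial_iff_two_le.2 (by omega))
  rw [hsum]
  constructor
  · exact fun h => funext fun i =>
      eq_of_dirichletKL_eq_zero (fun i _ => hα i) (fun i _ => hβ i) hnt (Finset.mem_univ i) h
  · rintro rfl
    simp [dirichletKL, logGammaBregman_self]
end

section
/- Let (X, 𝒜, μ) be a probability space, ι a nonempty finite index type, g : ι → X → ℝ measurable functions with g b x > 0 for μ-a.e. x, and ω : ι → ℝ with ω b > 0 for all b and ∑ b, ω b = 1. Assume that for each b the function x ↦ log (g b x) is μ-integrable, and set c b = ∫ log (g b x) dμ(x). Then the supremum over positive probability vectors φ (φ b > 0, ∑ b, φ b = 1) of ℒ(φ) = ∑ b, φ b · ∫ log (ω b · g b x / φ b) dμ(x) equals log (∑ b, ω b · Real.exp (c b)), and it is attained at φ̂ b = ω b · Real.exp (c b) / ∑ b', ω b' · Real.exp (c b'). -/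
/-!
Since `∫ log (ω_b g_b / t) dμ = log (ω_b e^{c_b} / t)` for every constant `t > 0`, the bound is the
finite-dimensional function `ℒ(φ) = ∑_b φ_b log (a_b / φ_b)` with `a_b = ω_b e^{c_b}`. Jensen's
inequality for the concave logarithm gives `ℒ(φ) ≤ log ∑_b a_b`, with equality when `a_b / φ_b`
does not depend on `b`, that is at `φ = a / ∑_b a_b`.
-/

open MeasureTheory Real

theorem integral_log_const_mul_div {X : Type*} [MeasurableSpace X] {μ : Measure X}
    [IsProbabilityMeasure μ] {f : X → ℝ} (hfpos : ∀ᵐ x ∂μ, 0 < f x)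
    (hf : Integrable (fun x => log (f x)) μ) {w t : ℝ} (hw : 0 < w) (ht : 0 < t) :
    ∫ x, log (w * f x / t) ∂μ = log (w * exp (∫ x, log (f x) ∂μ) / t) := by
  have hsplit : (fun x => log (w * f x / t)) =ᵐ[μ] fun x => log (w / t) + log (f x) := by
    filter_upwards [hfpos] with x hx
    rw [mul_div_right_comm, log_mul (div_pos hw ht).ne' hx.ne']
  rw [integral_congr_ae hsplit, integral_add (integrable_const _) hf, integral_const,
    probReal_univ, one_smul, mul_div_right_comm, log_mul (div_pos hw ht).ne' (exp_pos _).ne',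
    log_exp]

section LogSum

variable {ι : Type*} {s : Finset ι} {a : ι → ℝ}

theorem sum_mul_log_div_le_log_sum (ha : ∀ i ∈ s, 0 < a i) {φ : ι → ℝ}
    (hφ : ∀ i ∈ s, 0 < φ i) (hφsum : ∑ i ∈ s, φ i = 1) :
    ∑ i ∈ s, φ i * log (a i / φ i) ≤ log (∑ i ∈ s, a i) :=
  calc ∑ i ∈ s, φ i * log (a i / φ i)
      ≤ log (∑ i ∈ s, φ i * (a i / φ i)) :=
        strictConcaveOn_log_Ioi.concaveOn.le_map_sum (fun i hi => (hφ i hi).le) hφsum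
          fun i hi => Set.mem_Ioi.mpr (div_pos (ha i hi) (hφ i hi))
    _ = log (∑ i ∈ s, a i) := by
        rw [Finset.sum_congr rfl fun i hi => mul_div_cancel₀ (a i) (hφ i hi).ne']

theorem sum_normalized_mul_log_div_eq_log_sum (ha : ∀ i ∈ s, 0 < a i) :
    ∑ i ∈ s, (a i / ∑ j ∈ s, a j) * log (a i / (a i / ∑ j ∈ s, a j)) =
      log (∑ i ∈ s, a i) := by
  rw [Finset.sum_congr rfl fun i hi => by rw [div_div_cancel₀ (ha i hi).ne'], ← Finset.sum_mul,
    ← Finset.sum_div]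
  rcases eq_or_ne (∑ i ∈ s, a i) 0 with hS | hS
  · simp [hS]
  · rw [div_self hS, one_mul]

theorem isGreatest_sum_mul_log_div [Fintype ι] [Nonempty ι] (ha : ∀ i, 0 < a i) :
    IsGreatest {r : ℝ | ∃ φ : ι → ℝ, (∀ i, 0 < φ i) ∧ ∑ i, φ i = 1 ∧
        r = ∑ i, φ i * log (a i / φ i)} (log (∑ i, a i)) := by
  have hS : 0 < ∑ i, a i := Finset.sum_pos (fun i _ => ha i) Finset.univ_nonempty
  refine ⟨⟨fun i => a i / ∑ j, a j, fun i => div_pos (ha i) hS, ?_,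
    (sum_normalized_mul_log_div_eq_log_sum fun i _ => ha i).symm⟩, ?_⟩
  · rw [← Finset.sum_div, div_self hS.ne']
  · rintro r ⟨φ, hφ, hφsum, rfl⟩
    exact sum_mul_log_div_le_log_sum (fun i _ => ha i) (fun i _ => hφ i) hφsum

end LogSum

theorem variational_bound_isGreatest_general {X : Type*} [MeasurableSpace X]
    (μ : Measure X) [IsProbabilityMeasure μ]
    {ι : Type*} [Fintype ι] [Nonempty ι]
    (g : ι → X → ℝ)
    (hgpos : ∀ b, ∀ᵐ x ∂μ, 0 < g b x)
    (ω : ι → ℝ) (hω : ∀ b, 0 < ω b)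
    (hint : ∀ b, Integrable (fun x => Real.log (g b x)) μ)
    (c : ι → ℝ) (hc : ∀ b, c b = ∫ x, Real.log (g b x) ∂μ) :
    IsGreatest
        {r : ℝ | ∃ φ : ι → ℝ, (∀ b, 0 < φ b) ∧ ∑ b, φ b = 1 ∧
          r = ∑ b, φ b * ∫ x, Real.log (ω b * g b x / φ b) ∂μ}
        (Real.log (∑ b, ω b * Real.exp (c b))) ∧
      ∑ b, (ω b * Real.exp (c b) / ∑ b', ω b' * Real.exp (c b')) *
          ∫ x, Real.log (ω b * g b x /
            (ω b * Real.exp (c b) / ∑ b', ω b' * Real.exp (c b'))) ∂μ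
        = Real.log (∑ b, ω b * Real.exp (c b)) := by
  set a : ι → ℝ := fun b => ω b * exp (c b)
  have ha : ∀ b, 0 < a b := fun b => mul_pos (hω b) (exp_pos _)
  have hbound : ∀ b t, 0 < t → ∫ x, log (ω b * g b x / t) ∂μ = log (a b / t) := fun b t ht => by
    rw [integral_log_const_mul_div (hgpos b) (hint b) (hω b) ht, ← hc b]
  have hS : 0 < ∑ b, a b := Finset.sum_pos (fun b _ => ha b) Finset.univ_nonempty
  constructor
  · convert isGreatest_sum_mul_log_div ha using 3 with r
    refine exists_congr fun φ => and_congr_right fun hφ => and_congr_right fun _ => ?_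
    rw [Finset.sum_congr rfl fun b _ => by rw [hbound b (φ b) (hφ b)]]
  · rw [Finset.sum_congr rfl fun b _ => by rw [hbound b _ (div_pos (ha b) hS)]]
    exact sum_normalized_mul_log_div_eq_log_sum fun b _ => ha b

/-- Optimal variational parameters: the supremum, over positive probability vectors `φ`,
of the variational lower bound `ℒ(φ) = ∑ b, φ b * ∫ log (ω b * g b x / φ b) dμ` equals
`log (∑ b, ω b * exp (c b))` with `c b = ∫ log (g b x) dμ`, and it is attained at
`φ̂ b = ω b * exp (c b) / ∑ b', ω b' * exp (c b')`. -/
theorem variational_bound_isGreatest {X : Type*} [MeasurableSpace X]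
    (μ : Measure X) [IsProbabilityMeasure μ]
    {ι : Type*} [Fintype ι] [Nonempty ι]
    (g : ι → X → ℝ) (hgmeas : ∀ b, Measurable (g b))
    (hgpos : ∀ b, ∀ᵐ x ∂μ, 0 < g b x)
    (ω : ι → ℝ) (hω : ∀ b, 0 < ω b) (hωsum : ∑ b, ω b = 1)
    (hint : ∀ b, Integrable (fun x => Real.log (g b x)) μ)
    (c : ι → ℝ) (hc : ∀ b, c b = ∫ x, Real.log (g b x) ∂μ) :
    IsGreatest
        {r : ℝ | ∃ φ : ι → ℝ, (∀ b, 0 < φ b) ∧ ∑ b, φ b = 1 ∧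
          r = ∑ b, φ b * ∫ x, Real.log (ω b * g b x / φ b) ∂μ}
        (Real.log (∑ b, ω b * Real.exp (c b))) ∧
      ∑ b, (ω b * Real.exp (c b) / ∑ b', ω b' * Real.exp (c b')) *
          ∫ x, Real.log (ω b * g b x /
            (ω b * Real.exp (c b) / ∑ b', ω b' * Real.exp (c b'))) ∂μ
        = Real.log (∑ b, ω b * Real.exp (c b)) :=
  variational_bound_isGreatest_general μ g hgpos ω hω hint c hc
end

section
/- (Proposition: variational KL approximation for mixtures.) Let (X, 𝒜, ν) be a σ-finite measure space. Let k, m ≥ 1, let f : Fin k → X → ℝ and g : Fin m → X → ℝ be measurable with f a x > 0 and g b x > 0 for ν-a.e. x and ∫ f a dν = 1, ∫ g b dν = 1 for all a, b. Let π : Fin k → ℝ and ω : Fin m → ℝ satisfy π a > 0, ω b > 0, ∑ a, π a = 1, ∑ b, ω b = 1. Assume that for all a, a', b the functions x ↦ f a x · log (f a' x) and x ↦ f a x · log (g b x) are ν-integrable. Define D(u, v) = ∫ u x · log (u x / v x) dν(x), the optimal variational parameters ψ̂(a', a) = π a' · Real.exp (−D(f a, f a')) / ∑ â, π â · Real.exp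 (−D(f a, f â)) and φ̂(b, a) = ω b · Real.exp (−D(f a, g b)) / ∑ b', ω b' · Real.exp (−D(f a, g b')), and the bounds ℒ_ff = ∑ a, π a · ∑ a', ψ̂(a', a) · ∫ f a x · log (π a' · f a' x / ψ̂(a', a)) dν(x) and ℒ_fg = ∑ a, π a · ∑ b, φ̂(b, a) · ∫ f a x · log (ω b · g b x / φ̂(b, a)) dν(x). Then ℒ_ff − ℒ_fg = ∑ a, π a · log ((∑ a', π a' · Real.exp (−D(f a, f a'))) / (∑ b, ω b · Real.exp (−D(f a, g b)))). -/
/-!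
For `u = f_a` and components `h_b` with weights `q_b` (either `f_{a'}, π_{a'}` or `g_b, ω_b`),
at the optimal weights `φ̂_b ∝ q_b e^{-D(u‖h_b)}` every term of the Jensen bound
`∑_b φ̂_b ∫ u log (q_b h_b / φ̂_b)` is the same number: since
`log (q_b h_b / φ̂_b) = log h_b + D(u‖h_b) + log ∑_{b'} q_{b'} e^{-D(u‖h_{b'})}` and
`∫ u log h_b + D(u‖h_b) = ∫ u log u`, the optimized bound equals
`log ∑_b q_b e^{-D(u‖h_b)} + ∫ u log u`. The entropy terms `∫ f_a log f_a` cancel in the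
difference of the two bounds, leaving the logarithm of the ratio of the two partition sums.
-/

open MeasureTheory Real

section Integrals

variable {X : Type*} [MeasurableSpace X] {ν : Measure X}

theorem integral_mul_log_div_eq_sub {u h : X → ℝ}
    (huu : Integrable (fun x => u x * log (u x)) ν)
    (huh : Integrable (fun x => u x * log (h x)) ν) (hh : ∀ᵐ x ∂ν, h x ≠ 0) :
    ∫ x, u x * log (u x / h x) ∂ν = ∫ x, u x * log (u x) ∂ν - ∫ x, u x * log (h x) ∂ν := by
  rw [← integral_sub huu huh]
  refine integral_congr_ae (hh.mono fun x hx => ?_)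
  rcases eq_or_ne (u x) 0 with hu | hu
  · simp [hu]
  · simp only [log_div hu hx, mul_sub]

theorem integral_mul_log_mul_div {u h : X → ℝ} (hu : Integrable u ν)
    (huh : Integrable (fun x => u x * log (h x)) ν) (hh : ∀ᵐ x ∂ν, h x ≠ 0)
    {c d : ℝ} (hc : c ≠ 0) (hd : d ≠ 0) :
    ∫ x, u x * log (c * h x / d) ∂ν = ∫ x, u x * log (h x) ∂ν + log (c / d) * ∫ x, u x ∂ν := by
  rw [← integral_const_mul, ← integral_add huh (hu.const_mul _)]
  refine integral_congr_ae (hh.mono fun x hx => ?_)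
  simp only [mul_div_right_comm c, log_mul (div_ne_zero hc hd) hx]
  ring

end Integrals

section Gibbs

variable {ι : Type*} [Fintype ι] {q : ι → ℝ}

/-- The optimal variational parameters `φ̂_{b|a}`, with `q = ω` and `d b = D(f_a‖g_b)`. -/
noncomputable def gibbsWeight (q d : ι → ℝ) (i : ι) : ℝ :=
  q i * exp (-d i) / ∑ j, q j * exp (-d j)

theorem sum_mul_exp_neg_pos [Nonempty ι] (hq : ∀ i, 0 < q i) (d : ι → ℝ) :
    0 < ∑ j, q j * exp (-d j) :=
  Finset.sum_pos (fun j _ => mul_pos (hq j) (exp_pos _)) Finset.univ_nonempty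

theorem gibbsWeight_pos (hq : ∀ i, 0 < q i) (d : ι → ℝ) (i : ι) : 0 < gibbsWeight q d i :=
  have : Nonempty ι := ⟨i⟩
  div_pos (mul_pos (hq i) (exp_pos _)) (sum_mul_exp_neg_pos hq d)

theorem sum_gibbsWeight [Nonempty ι] (hq : ∀ i, 0 < q i) (d : ι → ℝ) :
    ∑ i, gibbsWeight q d i = 1 := by
  unfold gibbsWeight
  rw [← Finset.sum_div, div_self (sum_mul_exp_neg_pos hq d).ne']

theorem div_gibbsWeight (hq : ∀ i, 0 < q i) (d : ι → ℝ) (i : ι) :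
    q i / gibbsWeight q d i = (∑ j, q j * exp (-d j)) * exp (d i) := by
  have : Nonempty ι := ⟨i⟩
  have hS := (sum_mul_exp_neg_pos hq d).ne'
  rw [gibbsWeight, exp_neg]
  field_simp [(hq i).ne', exp_ne_zero]

variable {X : Type*} [MeasurableSpace X] {ν : Measure X}

theorem sum_gibbsWeight_mul_integral_mul_log [Nonempty ι] (hq : ∀ i, 0 < q i)
    {u : X → ℝ} {h : ι → X → ℝ} (hu : ∫ x, u x ∂ν = 1)
    (huu : Integrable (fun x => u x * log (u x)) ν)
    (huh : ∀ i, Integrable (fun x => u x * log (h i x)) ν) (hh : ∀ i, ∀ᵐ x ∂ν, h i x ≠ 0)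
    {d : ι → ℝ} (hd : ∀ i, d i = ∫ x, u x * log (u x / h i x) ∂ν)
    {φ : ι → ℝ} (hφ : ∀ i, φ i = gibbsWeight q d i) :
    ∑ i, φ i * ∫ x, u x * log (q i * h i x / φ i) ∂ν =
      log (∑ i, q i * exp (-d i)) + ∫ x, u x * log (u x) ∂ν := by
  have hu_int : Integrable u ν := .of_integral_ne_zero (by rw [hu]; exact one_ne_zero)
  obtain rfl : φ = gibbsWeight q d := funext hφ
  have term_eq : ∀ i, ∫ x, u x * log (q i * h i x / gibbsWeight q d i) ∂ν =
      log (∑ i, q i * exp (-d i)) + ∫ x, u x * log (u x) ∂ν := by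
    intro i
    rw [integral_mul_log_mul_div hu_int (huh i) (hh i) (hq i).ne'
        (gibbsWeight_pos hq d i).ne', div_gibbsWeight hq, hu, mul_one,
      log_mul (sum_mul_exp_neg_pos hq d).ne' (exp_ne_zero _), log_exp, hd,
      integral_mul_log_div_eq_sub huu (huh i) (hh i)]
    ring
  simp only [term_eq, ← Finset.sum_mul, sum_gibbsWeight hq, one_mul]

end Gibbs

theorem variational_kl_mixture_general {X : Type*} [MeasurableSpace X]
    (ν : Measure X)
    (k m : ℕ) (hm : 1 ≤ m)
    (f : Fin k → X → ℝ) (g : Fin m → X → ℝ)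
    (hfpos : ∀ a, ∀ᵐ x ∂ν, 0 < f a x) (hgpos : ∀ b, ∀ᵐ x ∂ν, 0 < g b x)
    (hfone : ∀ a, ∫ x, f a x ∂ν = 1)
    (p : Fin k → ℝ) (w : Fin m → ℝ)
    (hp : ∀ a, 0 < p a) (hw : ∀ b, 0 < w b)
    (hintff : ∀ a a', Integrable (fun x => f a x * Real.log (f a' x)) ν)
    (hintfg : ∀ a b, Integrable (fun x => f a x * Real.log (g b x)) ν)
    -- the component Kullback–Leibler divergence
    (D : (X → ℝ) → (X → ℝ) → ℝ)
    (hD : ∀ u v, D u v = ∫ x, u x * Real.log (u x / v x) ∂ν)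
    -- the optimal variational parameters
    (ψhat : Fin k → Fin k → ℝ)
    (hψhat : ∀ a' a, ψhat a' a =
      p a' * Real.exp (-(D (f a) (f a'))) / ∑ a2, p a2 * Real.exp (-(D (f a) (f a2))))
    (φhat : Fin m → Fin k → ℝ)
    (hφhat : ∀ b a, φhat b a =
      w b * Real.exp (-(D (f a) (g b))) / ∑ b', w b' * Real.exp (-(D (f a) (g b'))))
    -- the optimized variational lower bounds ℒ_f(f, ψ̂) and ℒ_f(g, φ̂)
    (Lff Lfg : ℝ)
    (hLff : Lff = ∑ a, p a * ∑ a', ψhat a' a *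
      ∫ x, f a x * Real.log (p a' * f a' x / ψhat a' a) ∂ν)
    (hLfg : Lfg = ∑ a, p a * ∑ b, φhat b a *
      ∫ x, f a x * Real.log (w b * g b x / φhat b a) ∂ν) :
    Lff - Lfg = ∑ a, p a * Real.log
      ((∑ a', p a' * Real.exp (-(D (f a) (f a')))) /
        (∑ b, w b * Real.exp (-(D (f a) (g b))))) := by
  have : Nonempty (Fin m) := ⟨⟨0, hm⟩⟩
  rw [hLff, hLfg, ← Finset.sum_sub_distrib]
  refine Finset.sum_congr rfl fun a _ => ?_
  have : Nonempty (Fin k) := ⟨a⟩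
  rw [sum_gibbsWeight_mul_integral_mul_log hp (hfone a) (hintff a a) (hintff a)
      (fun a' => (hfpos a').mono fun _ hx => hx.ne')
      (fun _ => hD _ _) (fun a' => hψhat a' a),
    sum_gibbsWeight_mul_integral_mul_log hw (hfone a) (hintff a a) (hintfg a)
      (fun b => (hgpos b).mono fun _ hx => hx.ne') (fun _ => hD _ _) (fun b => hφhat b a),
    log_div (sum_mul_exp_neg_pos hp _).ne' (sum_mul_exp_neg_pos hw _).ne']
  ring

/-- Proposition: the variational approximation of the Kullback–Leibler divergence between
two mixtures `f = ∑ a, p a • f a` and `g = ∑ b, w b • g b` has the closed form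
`ℒ_f(f, ψ̂) − ℒ_f(g, φ̂) = ∑ a, p a * log ((∑ a', p a' * exp (−D(f a‖f a'))) /
(∑ b, w b * exp (−D(f a‖g b))))`. -/
theorem variational_kl_mixture {X : Type*} [MeasurableSpace X]
    (ν : Measure X) [SigmaFinite ν]
    (k m : ℕ) (hk : 1 ≤ k) (hm : 1 ≤ m)
    (f : Fin k → X → ℝ) (g : Fin m → X → ℝ)
    (hfmeas : ∀ a, Measurable (f a)) (hgmeas : ∀ b, Measurable (g b))
    (hfpos : ∀ a, ∀ᵐ x ∂ν, 0 < f a x) (hgpos : ∀ b, ∀ᵐ x ∂ν, 0 < g b x)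
    (hfone : ∀ a, ∫ x, f a x ∂ν = 1) (hgone : ∀ b, ∫ x, g b x ∂ν = 1)
    (p : Fin k → ℝ) (w : Fin m → ℝ)
    (hp : ∀ a, 0 < p a) (hw : ∀ b, 0 < w b)
    (hpsum : ∑ a, p a = 1) (hwsum : ∑ b, w b = 1)
    (hintff : ∀ a a', Integrable (fun x => f a x * Real.log (f a' x)) ν)
    (hintfg : ∀ a b, Integrable (fun x => f a x * Real.log (g b x)) ν)
    -- the component Kullback–Leibler divergence
    (D : (X → ℝ) → (X → ℝ) → ℝ)
    (hD : ∀ u v, D u v = ∫ x, u x * Real.log (u x / v x) ∂ν)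
    -- the optimal variational parameters
    (ψhat : Fin k → Fin k → ℝ)
    (hψhat : ∀ a' a, ψhat a' a =
      p a' * Real.exp (-(D (f a) (f a'))) / ∑ a2, p a2 * Real.exp (-(D (f a) (f a2))))
    (φhat : Fin m → Fin k → ℝ)
    (hφhat : ∀ b a, φhat b a =
      w b * Real.exp (-(D (f a) (g b))) / ∑ b', w b' * Real.exp (-(D (f a) (g b'))))
    -- the optimized variational lower bounds ℒ_f(f, ψ̂) and ℒ_f(g, φ̂)
    (Lff Lfg : ℝ)
    (hLff : Lff = ∑ a, p a * ∑ a', ψhat a' a *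
      ∫ x, f a x * Real.log (p a' * f a' x / ψhat a' a) ∂ν)
    (hLfg : Lfg = ∑ a, p a * ∑ b, φhat b a *
      ∫ x, f a x * Real.log (w b * g b x / φhat b a) ∂ν) :
    Lff - Lfg = ∑ a, p a * Real.log
      ((∑ a', p a' * Real.exp (-(D (f a) (f a')))) /
        (∑ b, w b * Real.exp (-(D (f a) (g b))))) :=
  variational_kl_mixture_general ν k m hm f g hfpos hgpos hfone p w hp hw hintff hintfg D hD ψhat
    hψhat φhat hφhat Lff Lfg hLff hLfg
end
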